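/- arXiv:2112.04335 — 8 statements merged into one kernel-verified Lean document; each statement's English description precedes it below -/
import Mathlib

section
/- Let G be a snark (a connected cubic graph that is not 3-edge-colourable) and let e = uv be an edge of G. Then the cubic graph G∼e obtained from G by deleting e and suppressing the two resulting 2-valent vertices is 3-edge-colourable if and only if the graph G − {u,v} (G with both endvertices of e removed) is 3-edge-colourable. -/
/-- The Klein four-group `Z₂ × Z₂`; Tait colourings use its three nonzero
elements as colours. -/
abbrev Klein : Type := ZMod 2 × ZMod 2

/-- A (cubic) multipole: a finite set of vertices and edges, where each edge has
two ends (`fst` and `snd`), each of which is either incident with a vertex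
(`some v`) or free (`none`), the latter being a *semiedge*. -/
structure Multipole where
  V : Type
  E : Type
  [instVF : Fintype V]
  [instEF : Fintype E]
  [instVD : DecidableEq V]
  [instED : DecidableEq E]
  fst : E → Option V
  snd : E → Option V

attribute [instance] Multipole.instVF Multipole.instEF Multipole.instVD Multipole.instED

namespace Multipole

variable (M : Multipole)

/-- The end of edge `e` on side `b`. -/
def endAt (e : M.E) (b : Bool) : Option M.V := if b then M.fst e else M.snd e

/-- The number of edge ends incident with `v`. -/
def degree (v : M.V) : ℕ :=
  (Finset.univ.filter fun p : M.E × Bool => M.endAt p.1 p.2 = some v).card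

/-- Every vertex is incident with exactly three edge ends. -/
def IsCubic : Prop := ∀ v : M.V, M.degree v = 3

/-- No semiedges: every edge end is incident with a vertex (i.e. `M` is a graph). -/
def Closed : Prop := ∀ (e : M.E) (b : Bool), M.endAt e b ≠ none

/-- Edge `e` joins vertices `x` and `y`. -/
def Joins (e : M.E) (x y : M.V) : Prop :=
  (M.fst e = some x ∧ M.snd e = some y) ∨ (M.fst e = some y ∧ M.snd e = some x)

def Adj (x y : M.V) : Prop := ∃ e : M.E, M.Joins e x y

def Conn : Prop := ∀ x y : M.V, Relation.ReflTransGen M.Adj x y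

/-- A proper 3-edge-colouring (Tait colouring): every edge gets a nonzero
element of the Klein group and the edge ends meeting at any vertex get
pairwise distinct colours. -/
def Proper (φ : M.E → Klein) : Prop :=
  (∀ e, φ e ≠ 0) ∧
  ∀ (v : M.V) (p q : M.E × Bool),
    M.endAt p.1 p.2 = some v → M.endAt q.1 q.2 = some v → p ≠ q → φ p.1 ≠ φ q.1

def Colourable : Prop := ∃ φ : M.E → Klein, M.Proper φ

/-- A colouring viewed as a nowhere-zero `Z₂ × Z₂`-flow: nonzero colours whose
sum at each vertex is `0`.  At 3-valent vertices this is equivalent to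
properness; at a 2-valent vertex it forces the two incident edges to receive
equal colours, which is exactly the condition for the colouring to descend to
the cubic graph obtained by suppressing that vertex. -/
def ProperFlow (φ : M.E → Klein) : Prop :=
  (∀ e, φ e ≠ 0) ∧
  ∀ v : M.V, (∑ p : M.E × Bool, if M.endAt p.1 p.2 = some v then φ p.1 else 0) = 0

def FlowColourable : Prop := ∃ φ : M.E → Klein, M.ProperFlow φ

/-- A snark: a connected cubic graph without a proper 3-edge-colouring. -/
def IsSnark : Prop := M.IsCubic ∧ M.Closed ∧ M.Conn ∧ ¬ M.Colourable

/-- The number of semiedges of `M`. -/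
def semiendCount : ℕ :=
  (Finset.univ.filter fun p : M.E × Bool => M.endAt p.1 p.2 = none).card

/-- The number of semiedges of `M` whose edge is coloured `c`. -/
def semiendColourCount (φ : M.E → Klein) (c : Klein) : ℕ :=
  (Finset.univ.filter fun p : M.E × Bool => M.endAt p.1 p.2 = none ∧ φ p.1 = c).card

/-- The sum of the colours on the semiedges of `M`. -/
def semiSum (φ : M.E → Klein) : Klein :=
  ∑ p : M.E × Bool, if M.endAt p.1 p.2 = none then φ p.1 else 0

/-- Delete a set of vertices, retaining dangling edges; edges with no end
outside `S` are discarded. -/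
noncomputable def delVerts (S : Finset M.V) : Multipole := by
  classical
  exact
    { V := {x : M.V // x ∉ S}
      E := {e : M.E // ∃ (b : Bool) (x : M.V), M.endAt e b = some x ∧ x ∉ S}
      fst := fun e => match M.fst e.1 with
        | none => none
        | some x => if h : x ∈ S then none else some ⟨x, h⟩
      snd := fun e => match M.snd e.1 with
        | none => none
        | some x => if h : x ∈ S then none else some ⟨x, h⟩ }

/-- The flow through the connector of `M.delVerts S` consisting of the
semiedges formerly incident with the deleted vertex `u`. -/
noncomputable def connFlow (S : Finset M.V) (φ : (M.delVerts S).E → Klein) (u : M.V) : Klein :=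
  ∑ e : (M.delVerts S).E,
    ((if M.fst e.1 = some u then φ e else 0) + (if M.snd e.1 = some u then φ e else 0))

/-- Delete a single edge (keeping its end vertices). -/
def delEdge (e0 : M.E) : Multipole where
  V := M.V
  E := {e : M.E // e ≠ e0}
  fst := fun e => M.fst e.1
  snd := fun e => M.snd e.1

/-- Delete a pair of edges (keeping their end vertices). -/
def delPair (e1 e2 : M.E) : Multipole where
  V := M.V
  E := {e : M.E // e ≠ e1 ∧ e ≠ e2}
  fst := fun e => M.fst e.1
  snd := fun e => M.snd e.1

/-- Sever the edge `e0`: replace it by two dangling edges. -/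
def sever (e0 : M.E) : Multipole where
  V := M.V
  E := M.E ⊕ Unit
  fst := fun e => match e with
    | .inl f => M.fst f
    | .inr _ => M.snd e0
  snd := fun e => match e with
    | .inl f => if f = e0 then none else M.snd f
    | .inr _ => none

/-- The I-extension `G(e₁,e₂)`: subdivide `e₁` and `e₂` each with a new vertex
and join the two new vertices by a new edge. -/
def extend (e1 e2 : M.E) : Multipole where
  V := M.V ⊕ Fin 2
  E := M.E ⊕ Fin 3
  fst := fun e => match e with
    | .inl f => (M.fst f).map Sum.inl
    | .inr i => if i = 0 then some (Sum.inr 0)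
        else if i = 1 then some (Sum.inr 1) else some (Sum.inr 0)
  snd := fun e => match e with
    | .inl f => if f = e1 then some (Sum.inr 0)
        else if f = e2 then some (Sum.inr 1) else (M.snd f).map Sum.inl
    | .inr i => if i = 0 then (M.snd e1).map Sum.inl
        else if i = 1 then (M.snd e2).map Sum.inl else some (Sum.inr 1)

/-- A bicritical snark: a snark in which the removal of any two distinct
vertices leaves a 3-edge-colourable multipole. -/
def Bicritical : Prop :=
  M.IsSnark ∧ ∀ x y : M.V, x ≠ y → (M.delVerts {x, y}).Colourable

end Multipole

/-!
Tait colourings of a cubic multipole are exactly the nowhere-zero `Z₂ × Z₂`-flows, and in a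
multipole without semiedges the boundaries of any edge function sum to zero over all vertices,
since every edge is counted twice. Hence a nowhere-zero function whose boundary vanishes
everywhere except possibly at `u` and `v` is a flow as soon as its boundary vanishes at `u`.

A flow on `G - e` restricts to a flow, i.e. a colouring, of `G - {u, v}`. Conversely, extend a
colouring of `G - {u, v}` by arbitrary nonzero values on the edges inside `{u, v}` and by `0` on
`e`. If the resulting boundary at `u` is `0` this is a flow on `G - e`; otherwise giving `e` that
boundary value as its colour yields a flow, hence a Tait colouring, of the snark `G`.
-/

theorem Klein.sum_eq_zero_iff_of_card_eq_three {α : Type*} [DecidableEq α] {s : Finset α}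
    {f : α → Klein} (hs : s.card = 3) (hf : ∀ a ∈ s, f a ≠ 0) :
    ∑ a ∈ s, f a = 0 ↔ ∀ a ∈ s, ∀ b ∈ s, a ≠ b → f a ≠ f b := by
  obtain ⟨a, b, c, hab, hac, hbc, rfl⟩ := Finset.card_eq_three.mp hs
  simp only [Finset.mem_insert, Finset.mem_singleton, forall_eq_or_imp, forall_eq] at hf ⊢
  rw [Finset.sum_insert (by simp [hab, hac]), Finset.sum_pair hbc]
  have key : ∀ x y z : Klein, x ≠ 0 → y ≠ 0 → z ≠ 0 →
      (x + (y + z) = 0 ↔ ¬ (x = y ∨ x = z ∨ y = z)) := by decide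
  rw [key _ _ _ hf.1 hf.2.1 hf.2.2]
  simp only [ne_eq, not_true, hab, hac, hbc, Ne.symm hab, Ne.symm hac, Ne.symm hbc,
    not_false_eq_true, forall_const, IsEmpty.forall_iff]
  tauto

namespace Multipole

variable {M : Multipole}

def boundary (φ : M.E → Klein) (x : M.V) : Klein :=
  ∑ p : M.E × Bool, if M.endAt p.1 p.2 = some x then φ p.1 else 0

theorem properFlow_iff {φ : M.E → Klein} :
    M.ProperFlow φ ↔ (∀ e, φ e ≠ 0) ∧ ∀ x, M.boundary φ x = 0 := Iff.rfl

theorem proper_iff_properFlow (hM : M.IsCubic) {φ : M.E → Klein} :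
    M.Proper φ ↔ M.ProperFlow φ := by
  refine and_congr_right fun hφ => forall_congr' fun x => ?_
  have hcard : (Finset.univ.filter fun p : M.E × Bool => M.endAt p.1 p.2 = some x).card = 3 :=
    hM x
  rw [← Finset.sum_filter,
    Klein.sum_eq_zero_iff_of_card_eq_three hcard fun p _ => hφ p.1]
  simp only [Finset.mem_filter, Finset.mem_univ, true_and]
  exact ⟨fun h p hp q hq => h p q hp hq, fun h p q hp hq => h p hp q hq⟩

theorem colourable_iff_flowColourable (hM : M.IsCubic) : M.Colourable ↔ M.FlowColourable :=
  exists_congr fun _ => proper_iff_properFlow hM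

theorem boundary_add (φ ψ : M.E → Klein) (x : M.V) :
    M.boundary (φ + ψ) x = M.boundary φ x + M.boundary ψ x := by
  simp only [boundary, ← Finset.sum_add_distrib, Pi.add_apply]
  exact Finset.sum_congr rfl fun p _ => by split_ifs <;> simp

theorem boundary_single (e : M.E) (a : Klein) (x : M.V) :
    M.boundary (Pi.single e a) x =
      (if M.fst e = some x then a else 0) + (if M.snd e = some x then a else 0) := by
  rw [boundary, Fintype.sum_prod_type, Finset.sum_eq_single e]
  · simp [endAt]
  · intro f _ hf
    simp [hf]
  · simp

theorem boundary_single_of_joins {e : M.E} {u v : M.V} (he : M.Joins e u v) (huv : u ≠ v)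
    (a : Klein) : M.boundary (Pi.single e a) u = a := by
  rcases he with ⟨h₁, h₂⟩ | ⟨h₁, h₂⟩ <;> simp [boundary_single, h₁, h₂, huv.symm]

theorem boundary_single_of_ne {e : M.E} {u v x : M.V} (he : M.Joins e u v) (hxu : x ≠ u)
    (hxv : x ≠ v) (a : Klein) : M.boundary (Pi.single e a) x = 0 := by
  rcases he with ⟨h₁, h₂⟩ | ⟨h₁, h₂⟩ <;>
    simp [boundary_single, h₁, h₂, Ne.symm hxu, Ne.symm hxv]

theorem sum_boundary_eq_zero (hM : M.Closed) (φ : M.E → Klein) : ∑ x, M.boundary φ x = 0 := by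
  have hend (p : M.E × Bool) :
      ∑ x, (if M.endAt p.1 p.2 = some x then φ p.1 else 0) = φ p.1 := by
    obtain ⟨y, hy⟩ := Option.ne_none_iff_exists'.mp (hM p.1 p.2)
    simp [hy]
  simp only [boundary]
  rw [Finset.sum_comm]
  simp only [hend, Fintype.sum_prod_type, Fintype.sum_bool]
  exact Finset.sum_eq_zero fun f _ => CharTwo.add_self_eq_zero (φ f)

theorem endAt_delEdge (e : M.E) (f : (M.delEdge e).E) (b : Bool) :
    (M.delEdge e).endAt f b = M.endAt f.1 b := by
  cases b <;> rfl

theorem Closed.delEdge (hM : M.Closed) (e : M.E) : (M.delEdge e).Closed := fun f b => by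
  rw [endAt_delEdge]
  exact hM f.1 b

theorem boundary_delEdge {e : M.E} {φ : (M.delEdge e).E → Klein} {χ : M.E → Klein}
    (hχ : ∀ f, χ f.1 = φ f) (he : χ e = 0) (x : M.V) :
    (M.delEdge e).boundary φ x = M.boundary χ x := by
  obtain rfl := funext hχ
  refine Fintype.sum_of_injective (Prod.map Subtype.val id)
    (Subtype.val_injective.prodMap Function.injective_id) _ _ ?_
    fun p => by rw [endAt_delEdge]; rfl
  rintro ⟨f, b⟩ hf
  obtain rfl : f = e := by
    by_contra h
    exact hf ⟨(⟨f, h⟩, b), rfl⟩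
  simp [he]

theorem endAt_delVerts_eq_some {S : Finset M.V} {f : (M.delVerts S).E} {b : Bool} {x : M.V}
    (hx : x ∉ S) : (M.delVerts S).endAt f b = some ⟨x, hx⟩ ↔ M.endAt f.1 b = some x := by
  cases b <;> simp only [endAt, delVerts, Bool.false_eq_true, if_false, if_true] <;>
    [generalize M.snd f.1 = o; generalize M.fst f.1 = o] <;>
    rcases o with _ | y <;> simp only [reduceCtorEq, Option.some.injEq] <;>
    split_ifs with hy <;> grind

theorem sum_ends_delVerts {β : Type*} [AddCommMonoid β] {S : Finset M.V} {x : M.V} (hx : x ∉ S)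
    (g : M.E → β) :
    ∑ p : (M.delVerts S).E × Bool,
        (if (M.delVerts S).endAt p.1 p.2 = some ⟨x, hx⟩ then g p.1.1 else 0) =
      ∑ p : M.E × Bool, if M.endAt p.1 p.2 = some x then g p.1 else 0 := by
  refine Fintype.sum_of_injective (Prod.map Subtype.val id)
    (Subtype.val_injective.prodMap Function.injective_id) _ _ ?_
    fun p => by simp only [Prod.map, id, endAt_delVerts_eq_some hx]
  rintro ⟨f, b⟩ hf
  exact if_neg fun h => hf ⟨(⟨f, b, x, h, hx⟩, b), rfl⟩

theorem degree_delVerts {S : Finset M.V} {x : M.V} (hx : x ∉ S) :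
    (M.delVerts S).degree ⟨x, hx⟩ = M.degree x := by
  simp only [degree, Finset.card_filter]
  exact sum_ends_delVerts hx fun _ => 1

theorem IsCubic.delVerts (hM : M.IsCubic) (S : Finset M.V) : (M.delVerts S).IsCubic :=
  fun ⟨x, hx⟩ => (degree_delVerts hx).trans (hM x)

theorem boundary_delVerts {S : Finset M.V} {ψ : (M.delVerts S).E → Klein} {χ : M.E → Klein}
    (hχ : ∀ f, χ f.1 = ψ f) {x : M.V} (hx : x ∉ S) :
    (M.delVerts S).boundary ψ ⟨x, hx⟩ = M.boundary χ x := by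
  obtain rfl := funext hχ
  exact sum_ends_delVerts hx χ

def IsFlowOutside (S : Finset M.V) (χ : M.E → Klein) : Prop :=
  (∀ f, χ f ≠ 0) ∧ ∀ x ∉ S, M.boundary χ x = 0

theorem IsFlowOutside.properFlow (hM : M.Closed) {u v : M.V} (huv : u ≠ v) {χ : M.E → Klein}
    (hχ : M.IsFlowOutside {u, v} χ) (hu : M.boundary χ u = 0) : M.ProperFlow χ := by
  have huv_sum : M.boundary χ u + M.boundary χ v = 0 := by
    rw [← Fintype.sum_eq_add u v huv fun x hx => hχ.2 x (by simp [hx.1, hx.2])]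
    exact sum_boundary_eq_zero hM χ
  refine properFlow_iff.mpr ⟨hχ.1, fun x => ?_⟩
  by_cases hx : x ∈ ({u, v} : Finset M.V)
  · rcases Finset.mem_insert.mp hx with rfl | hx
    · exact hu
    · rw [Finset.mem_singleton.mp hx]
      simpa [hu] using huv_sum
  · exact hχ.2 x hx

theorem delVerts_val_ne {S : Finset M.V} {e : M.E} {u v : M.V} (he : M.Joins e u v)
    (hu : u ∈ S) (hv : v ∈ S) (f : (M.delVerts S).E) : f.1 ≠ e := by
  obtain ⟨b, x, hx, hxS⟩ := f.2
  rintro rfl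
  cases b <;> rcases he with ⟨h₁, h₂⟩ | ⟨h₁, h₂⟩ <;> simp_all [endAt]

theorem FlowColourable.delVerts_of_delEdge {S : Finset M.V} {e : M.E} {u v : M.V}
    (he : M.Joins e u v) (hu : u ∈ S) (hv : v ∈ S) (h : (M.delEdge e).FlowColourable) :
    (M.delVerts S).FlowColourable := by
  obtain ⟨φ, hφ0, hφ⟩ := h
  set χ : M.E → Klein := Function.extend Subtype.val φ 0
  have hχ : ∀ f : (M.delEdge e).E, χ f.1 = φ f := Subtype.val_injective.extend_apply φ 0
  have hχe : χ e = 0 := Function.extend_apply' _ _ _ fun ⟨f, hf⟩ => f.2 hf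
  refine ⟨fun f => χ f.1, fun f => ?_, fun ⟨x, hx⟩ => ?_⟩
  · exact ne_of_eq_of_ne (hχ ⟨f.1, delVerts_val_ne he hu hv f⟩) (hφ0 _)
  · exact (boundary_delVerts (fun _ => rfl) hx).trans
      ((boundary_delEdge hχ hχe x).symm.trans (hφ x))

theorem ProperFlow.exists_isFlowOutside_of_delVerts {S : Finset M.V}
    {ψ : (M.delVerts S).E → Klein} (hψ : (M.delVerts S).ProperFlow ψ) :
    ∃ χ : M.E → Klein, M.IsFlowOutside S χ := by
  have hχ : ∀ f : (M.delVerts S).E, Function.extend Subtype.val ψ 1 f.1 = ψ f :=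
    Subtype.val_injective.extend_apply ψ 1
  refine ⟨Function.extend Subtype.val ψ 1, fun f => ?_, fun x hx => ?_⟩
  · by_cases h : ∃ g : (M.delVerts S).E, g.1 = f
    · obtain ⟨g, rfl⟩ := h
      exact ne_of_eq_of_ne (hχ g) (hψ.1 g)
    · exact ne_of_eq_of_ne (Function.extend_apply' _ _ _ h) one_ne_zero
  · exact (boundary_delVerts hχ hx).symm.trans (hψ.2 ⟨x, hx⟩)

theorem flowColourable_or_delEdge_flowColourable (hM : M.Closed) {e : M.E} {u v : M.V}
    (he : M.Joins e u v) (huv : u ≠ v) {χ : M.E → Klein} (hχ : M.IsFlowOutside {u, v} χ) :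
    M.FlowColourable ∨ (M.delEdge e).FlowColourable := by
  set χ₀ := Function.update χ e 0
  have hupdate : ∀ a, Function.update χ e a = χ₀ + Pi.single e a := by
    intro a
    ext1 f
    by_cases hf : f = e <;> simp [χ₀, hf]
  have hoff : ∀ a, ∀ x ∉ ({u, v} : Finset M.V), M.boundary (χ₀ + Pi.single e a) x =
      M.boundary χ₀ x := by
    intro a x hx
    simp only [Finset.mem_insert, Finset.mem_singleton, not_or] at hx
    rw [boundary_add, boundary_single_of_ne he hx.1 hx.2, add_zero]
  have hχ₀ : ∀ x ∉ ({u, v} : Finset M.V), M.boundary χ₀ x = 0 := fun x hx => by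
    rw [← hoff (χ e) x hx, ← hupdate, Function.update_eq_self]
    exact hχ.2 x hx
  set γ := M.boundary χ₀ u
  by_cases hγ : γ = 0
  · right
    have hdel : ∀ x, (M.delEdge e).boundary (fun f => χ₀ f.1) x = M.boundary χ₀ x :=
      boundary_delEdge (fun _ => rfl) (Function.update_self e 0 χ)
    refine ⟨fun f => χ₀ f.1,
      IsFlowOutside.properFlow (hM.delEdge e) huv ⟨fun f => ?_, fun x hx => ?_⟩ ?_⟩
    · exact ne_of_eq_of_ne (Function.update_of_ne f.2 _ _) (hχ.1 f.1)
    · exact (hdel x).trans (hχ₀ x hx)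
    · exact (hdel u).trans hγ
  · left
    refine ⟨χ₀ + Pi.single e γ,
      IsFlowOutside.properFlow hM huv ⟨fun f => ?_, fun x hx => ?_⟩ ?_⟩
    · rw [← hupdate]
      by_cases hf : f = e
      · rwa [hf, Function.update_self]
      · rw [Function.update_of_ne hf]
        exact hχ.1 f
    · rw [hoff γ x hx]
      exact hχ₀ x hx
    · rw [boundary_add, boundary_single_of_joins he huv, CharTwo.add_self_eq_zero]

end Multipole

open Multipole

/-- Let `G` be a snark and `e = uv` one of its edges.  The cubic graph `G∼e`
obtained by deleting `e` and suppressing the two resulting 2-valent vertices is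
3-edge-colourable (equivalently, `G` minus the edge `e` carries a nowhere-zero
`Z₂ × Z₂`-flow colouring, which is exactly a colouring descending through the
suppression of `u` and `v`) if and only if the multipole `G − {u,v}` is
3-edge-colourable. -/
theorem edge_reduction_iff_vertex_removal (G : Multipole) (hG : G.IsSnark)
    (u v : G.V) (huv : u ≠ v) (e : G.E) (he : G.Joins e u v) :
    (G.delEdge e).FlowColourable ↔ (G.delVerts {u, v}).Colourable := by
  obtain ⟨hcub, hcl, -, hncol⟩ := hG
  rw [colourable_iff_flowColourable (hcub.delVerts _)]
  refine ⟨FlowColourable.delVerts_of_delEdge he (by simp) (by simp), fun ⟨ψ, hψ⟩ => ?_⟩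
  obtain ⟨χ, hχ⟩ := hψ.exists_isFlowOutside_of_delVerts
  refine (flowColourable_or_delEdge_flowColourable hcl he huv hχ).resolve_left ?_
  rwa [← colourable_iff_flowColourable hcub]
end

section
/- Let G be a snark and let e1 and e2 be distinct edges of G. The edge extension G(e1,e2) — obtained by subdividing e1 and e2 each with one new vertex and joining the two new vertices by a new edge — is a snark if and only if the pair {e1,e2} is removable, i.e. G − {e1,e2} is not 3-edge-colourable. -/
/-! A colouring of `G(e₁,e₂)` restricts to a colouring of `G − {e₁,e₂}`, so when the pair is
removable the extension, which is cubic and connected like `G`, is a snark.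

Conversely, a colouring of `G − {e₁,e₂}` extends to a colouring of the edge ends of `G` that is
proper at every vertex and agrees on the two ends of every edge other than `e₁` and `e₂`. By the
parity lemma the colours of all edge ends sum to `0`, so the discrepancies `φ(e₁⁺) + φ(e₁⁻)` and
`φ(e₂⁺) + φ(e₂⁻)` are one and the same element `k`. If `k = 0` this is a colouring of the snark
`G`; otherwise giving the new edge the colour `k` colours `G(e₁,e₂)`. -/

theorem Klein.sum_eq_zero_of_injective {α : Type*} [Fintype α] (hα : Fintype.card α = 3)
    {f : α → Klein} (hf : Function.Injective f) (h0 : ∀ a, f a ≠ 0) : ∑ a, f a = 0 := by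
  let g : α → {x : Klein // x ≠ 0} := fun a => ⟨f a, h0 a⟩
  have hg : Function.Bijective g :=
    (Fintype.bijective_iff_injective_and_card g).2
      ⟨fun a b h => hf (congrArg Subtype.val h), by rw [hα]; decide⟩
  calc ∑ a, f a = ∑ x : {x : Klein // x ≠ 0}, (x : Klein) :=
        Fintype.sum_bijective g hg _ _ fun _ => rfl
    _ = 0 := by decide

theorem Klein.pairwise_ne_of_add_eq {a b c : Klein} (ha : a ≠ 0) (hb : b ≠ 0) (hc : c ≠ 0)
    (habc : a + b = c) : a ≠ b ∧ a ≠ c ∧ b ≠ c := by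
  revert a b c; decide

namespace Multipole

section EdgeEnds

variable (M : Multipole)

abbrev Ends (v : M.V) : Type := {p : M.E × Bool // M.endAt p.1 p.2 = some v}

theorem card_ends (v : M.V) : Fintype.card (M.Ends v) = M.degree v :=
  Fintype.card_subtype _

def ProperEnds (A : M.E × Bool → Klein) : Prop :=
  (∀ p, A p ≠ 0) ∧ ∀ v, Function.Injective fun p : M.Ends v => A p

variable {M}

theorem proper_iff_properEnds {φ : M.E → Klein} :
    M.Proper φ ↔ M.ProperEnds fun p => φ p.1 := by
  refine and_congr ⟨fun h p => h p.1, fun h e => h (e, true)⟩ ⟨?_, ?_⟩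
  · intro h v p q hpq
    by_contra hne
    exact h v p.1 q.1 p.2 q.2 (fun h' => hne (Subtype.ext h')) hpq
  · intro h v p q hp hq hne hpq
    exact hne (congrArg Subtype.val (h v (a₁ := ⟨p, hp⟩) (a₂ := ⟨q, hq⟩) hpq))

theorem proper_of_properEnds {A : M.E × Bool → Klein} (hA : M.ProperEnds A)
    (hconst : ∀ f, A (f, true) = A (f, false)) : M.Proper fun f => A (f, true) := by
  refine proper_iff_properEnds.2 ?_
  convert hA using 2 with p
  obtain ⟨f, _ | _⟩ := p
  exacts [hconst f, rfl]

theorem ProperEnds.sum_eq_zero (hcub : M.IsCubic) (hcl : M.Closed) {A : M.E × Bool → Klein}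
    (hA : M.ProperEnds A) : ∑ p, A p = 0 := by
  rw [← Fintype.sum_fiberwise (fun p : M.E × Bool => M.endAt p.1 p.2) A, Fintype.sum_option]
  have : IsEmpty {p : M.E × Bool // M.endAt p.1 p.2 = none} := ⟨fun p => hcl p.1.1 p.1.2 p.2⟩
  rw [Finset.univ_eq_empty, Finset.sum_empty, zero_add]
  exact Finset.sum_eq_zero fun v _ =>
    Klein.sum_eq_zero_of_injective ((M.card_ends v).trans (hcub v)) (hA.2 v) fun p => hA.1 p

theorem sum_ends_eq_of_forall_ne {e1 e2 : M.E} (h12 : e1 ≠ e2) {A : M.E × Bool → Klein}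
    (hA : ∀ f, f ≠ e1 → f ≠ e2 → A (f, true) = A (f, false)) :
    ∑ p, A p = (A (e1, true) + A (e1, false)) + (A (e2, true) + A (e2, false)) := by
  rw [Fintype.sum_prod_type]
  simp only [Fintype.sum_bool]
  refine Fintype.sum_eq_add e1 e2 h12 fun f hf => ?_
  rw [hA f hf.1 hf.2]
  exact CharTwo.add_self_eq_zero _

theorem exists_properEnds_extending (hcub : M.IsCubic) (hcl : M.Closed)
    {s : Set (M.E × Bool)} {c : M.E × Bool → Klein} (hc0 : ∀ p ∈ s, c p ≠ 0)
    (hc : ∀ v, Set.InjOn (fun p : M.Ends v => c p) {p | p.1 ∈ s}) :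
    ∃ A, M.ProperEnds A ∧ ∀ p ∈ s, A p = c p := by
  have hcard : ∀ v, Fintype.card (M.Ends v) = (Finset.univ.filter (· ≠ (0 : Klein))).card :=
    fun v => (M.card_ends v).trans ((hcub v).trans (by decide))
  choose g hg using fun v => Set.MapsTo.exists_equiv_extend_of_card_eq (hcard v)
    (s := {p | p.1 ∈ s}) (f := fun p => c p) (fun p hp => by simpa using hc0 p hp) (hc v)
  have hsome : ∀ p : M.E × Bool, (M.endAt p.1 p.2).isSome := fun p =>
    Option.ne_none_iff_isSome.mp (hcl p.1 p.2)
  let vtx : M.E × Bool → M.V := fun p => (M.endAt p.1 p.2).get (hsome p)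
  have hvtx : ∀ p, M.endAt p.1 p.2 = some (vtx p) := fun p => Option.eq_some_of_isSome _
  let A : M.E × Bool → Klein := fun p => g (vtx p) ⟨p, hvtx p⟩
  have hA : ∀ v (p : M.Ends v), A p = g v p := by
    rintro v ⟨p, hp⟩
    obtain rfl : vtx p = v := Option.some_injective _ ((hvtx p).symm.trans hp)
    rfl
  refine ⟨A, ⟨fun p => ?_, fun v p q hpq => ?_⟩, fun p hp => ?_⟩
  · exact (Finset.mem_filter.mp (g (vtx p) ⟨p, hvtx p⟩).2).2
  · exact (g v).injective (Subtype.ext (by simpa only [hA] using hpq))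
  · exact (hA _ ⟨p, hvtx p⟩).trans (hg _ _ hp)

theorem exists_properEnds_of_delPair_colourable (hcub : M.IsCubic) (hcl : M.Closed)
    {e1 e2 : M.E} (h : (M.delPair e1 e2).Colourable) :
    ∃ A, M.ProperEnds A ∧ ∀ f, f ≠ e1 → f ≠ e2 → A (f, true) = A (f, false) := by
  obtain ⟨φ, hφ⟩ := h
  have hφinj := (proper_iff_properEnds.1 hφ).2
  let c : M.E × Bool → Klein := fun p => if h : p.1 ≠ e1 ∧ p.1 ≠ e2 then φ ⟨p.1, h⟩ else 0
  have hc : ∀ p (h : p.1 ≠ e1 ∧ p.1 ≠ e2), c p = φ ⟨p.1, h⟩ := fun p h => dif_pos h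
  obtain ⟨A, hA, hAc⟩ := exists_properEnds_extending hcub hcl
    (s := {p | p.1 ≠ e1 ∧ p.1 ≠ e2}) (c := c) (fun p hp => by rw [hc p hp]; exact hφ.1 _)
    (fun v p hp q hq hpq => by
      have := @hφinj v ⟨(⟨p.1.1, hp⟩, p.1.2), p.2⟩ ⟨(⟨q.1.1, hq⟩, q.1.2), q.2⟩
        (by simpa only [hc _ hp, hc _ hq] using hpq)
      exact Subtype.ext (congrArg (fun r : (M.delPair e1 e2).Ends v =>
        ((r.1.1 : {e : M.E // e ≠ e1 ∧ e ≠ e2}).1, r.1.2)) this))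
  refine ⟨A, hA, fun f h1 h2 => ?_⟩
  rw [hAc (f, true) ⟨h1, h2⟩, hAc (f, false) ⟨h1, h2⟩]

theorem degree_eq_three_of_endAt_iff {v : M.V} {a b c : M.E × Bool} (hab : a ≠ b) (hac : a ≠ c)
    (hbc : b ≠ c) (h : ∀ p, M.endAt p.1 p.2 = some v ↔ p = a ∨ p = b ∨ p = c) :
    M.degree v = 3 :=
  Finset.card_eq_three.2 ⟨a, b, c, hab, hac, hbc, by ext p; simp [h]⟩

theorem injective_ends_of_endAt_iff {v : M.V} {a b c : M.E × Bool}
    (h : ∀ p, M.endAt p.1 p.2 = some v ↔ p = a ∨ p = b ∨ p = c) {A : M.E × Bool → Klein}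
    (hab : A a ≠ A b) (hac : A a ≠ A c) (hbc : A b ≠ A c) :
    Function.Injective fun p : M.Ends v => A p := by
  rintro ⟨p, hp⟩ ⟨q, hq⟩ hpq
  apply Subtype.ext
  rcases (h p).1 hp with rfl | rfl | rfl <;> rcases (h q).1 hq with rfl | rfl | rfl <;>
    first | rfl | exact absurd hpq ‹_› | exact absurd hpq.symm ‹_›

theorem reflTransGen_adj_symm {x y : M.V} (h : Relation.ReflTransGen M.Adj x y) :
    Relation.ReflTransGen M.Adj y x := by
  induction h with
  | refl => rfl
  | tail _ hbc ih =>
    obtain ⟨e, he⟩ := hbc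
    exact .head ⟨e, Or.symm he⟩ ih

end EdgeEnds

section Extension

variable {G : Multipole} {e1 e2 : G.E}

/-- The end of `G.extend e1 e2` corresponding to an end of `G`: the second ends of `e1` and `e2`
now lie on the new edges `inr 0` and `inr 1`. -/
def liftEnd (e1 e2 : G.E) : G.E × Bool → (G.E ⊕ Fin 3) × Bool
  | (f, true) => (.inl f, true)
  | (f, false) =>
    if f = e1 then (.inr 0, false) else if f = e2 then (.inr 1, false) else (.inl f, false)

theorem liftEnd_injective : Function.Injective (liftEnd (G := G) e1 e2) := by
  rintro ⟨f, _ | _⟩ ⟨g, _ | _⟩ h <;> simp only [liftEnd] at h <;> (try split_ifs at h) <;>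
    simp_all

theorem liftEnd_of_ne {f : G.E} (h1 : f ≠ e1) (h2 : f ≠ e2) (b : Bool) :
    liftEnd e1 e2 (f, b) = (.inl f, b) := by
  cases b <;> simp [liftEnd, h1, h2]

theorem extend_endAt_liftEnd (q : G.E × Bool) :
    (G.extend e1 e2).endAt (liftEnd e1 e2 q).1 (liftEnd e1 e2 q).2 =
      (G.endAt q.1 q.2).map .inl := by
  obtain ⟨f, _ | _⟩ := q <;> simp only [liftEnd] <;> (try split_ifs) <;>
    simp_all [extend, endAt]

theorem extend_endAt_inl_of_ne {f : G.E} (h1 : f ≠ e1) (h2 : f ≠ e2) (b : Bool) :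
    (G.extend e1 e2).endAt (.inl f) b = (G.endAt f b).map .inl := by
  simpa only [liftEnd_of_ne h1 h2] using extend_endAt_liftEnd (e1 := e1) (e2 := e2) (f, b)

theorem exists_liftEnd_of_extend_endAt (h12 : e1 ≠ e2) {p : (G.E ⊕ Fin 3) × Bool} {v : G.V}
    (hp : (G.extend e1 e2).endAt p.1 p.2 = some (.inl v)) : ∃ q, liftEnd e1 e2 q = p := by
  obtain ⟨f | i, _ | _⟩ := p
  · by_cases h1 : f = e1
    · simp [extend, endAt, h1] at hp
    by_cases h2 : f = e2
    · simp [extend, endAt, h2, Ne.symm h12] at hp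
    exact ⟨(f, false), liftEnd_of_ne h1 h2 false⟩
  · exact ⟨(f, true), rfl⟩
  · fin_cases i
    · exact ⟨(e1, false), if_pos rfl⟩
    · exact ⟨(e2, false), by simp [liftEnd, Ne.symm h12]⟩
    · simp [extend, endAt] at hp
  · fin_cases i <;> simp [extend, endAt] at hp

theorem extend_endAt_eq_inr_zero {p : (G.E ⊕ Fin 3) × Bool} :
    (G.extend e1 e2).endAt p.1 p.2 = some (.inr 0) ↔
      p = (.inl e1, false) ∨ p = (.inr 0, true) ∨ p = (.inr 2, true) := by
  obtain ⟨f | i, _ | _⟩ := p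
  · by_cases h1 : f = e1
    · simp [extend, endAt, h1]
    by_cases h2 : f = e2 <;> simp [extend, endAt, h1, h2]
  · simp [extend, endAt]
  · fin_cases i <;> simp [extend, endAt]
  · fin_cases i <;> simp [extend, endAt]

theorem extend_endAt_eq_inr_one (h12 : e1 ≠ e2) {p : (G.E ⊕ Fin 3) × Bool} :
    (G.extend e1 e2).endAt p.1 p.2 = some (.inr 1) ↔
      p = (.inl e2, false) ∨ p = (.inr 1, true) ∨ p = (.inr 2, false) := by
  obtain ⟨f | i, _ | _⟩ := p
  · by_cases h1 : f = e1
    · simp [extend, endAt, h1, h12]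
    by_cases h2 : f = e2 <;> simp [extend, endAt, h1, h2, Ne.symm h12]
  · simp [extend, endAt]
  · fin_cases i <;> simp [extend, endAt]
  · fin_cases i <;> simp [extend, endAt]

theorem extend_degree_inl (h12 : e1 ≠ e2) (v : G.V) :
    (G.extend e1 e2).degree (.inl v) = G.degree v := by
  refine ((G.extend e1 e2).card_ends (.inl v)).symm.trans ((Fintype.card_congr (Equiv.ofBijective
    (fun q : G.Ends v => (⟨liftEnd e1 e2 q, by rw [extend_endAt_liftEnd, q.2]; rfl⟩ :
      (G.extend e1 e2).Ends (.inl v))) ⟨?_, ?_⟩)).symm.trans (G.card_ends v))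
  · exact fun q q' h => Subtype.ext (liftEnd_injective (congrArg Subtype.val h))
  · rintro ⟨p, hp⟩
    obtain ⟨q, rfl⟩ := exists_liftEnd_of_extend_endAt h12 hp
    rw [extend_endAt_liftEnd] at hp
    exact ⟨⟨q, Option.map_injective Sum.inl_injective hp⟩, rfl⟩

theorem extend_isCubic (hcub : G.IsCubic) (h12 : e1 ≠ e2) : (G.extend e1 e2).IsCubic := by
  rintro (v | w)
  · rw [extend_degree_inl h12]; exact hcub v
  fin_cases w
  · exact degree_eq_three_of_endAt_iff (fun h => by cases h) (fun h => by cases h)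
      (fun h => by cases h) fun _ => extend_endAt_eq_inr_zero
  · exact degree_eq_three_of_endAt_iff (fun h => by cases h) (fun h => by cases h)
      (fun h => by cases h) fun _ => extend_endAt_eq_inr_one h12

theorem extend_closed (hcl : G.Closed) : (G.extend e1 e2).Closed := by
  have hfst : ∀ f, G.fst f ≠ none := fun f => hcl f true
  have hsnd : ∀ f, G.snd f ≠ none := fun f => hcl f false
  rintro (f | i) (_ | _)
  · simp only [endAt, extend, Bool.false_eq_true, if_false]
    split_ifs <;> simp [hsnd]
  · simp [endAt, extend, hfst]
  · fin_cases i <;> simp [endAt, extend, hsnd]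
  · fin_cases i <;> simp [endAt, extend]

theorem extend_reflTransGen_adj_of_fst_snd (h12 : e1 ≠ e2) {e : G.E} {x y : G.V}
    (hx : G.fst e = some x) (hy : G.snd e = some y) :
    Relation.ReflTransGen (G.extend e1 e2).Adj (.inl x) (.inl y) := by
  by_cases h1 : e = e1
  · subst h1
    have hx0 : (G.extend e e2).Adj (.inl x) (.inr 0) :=
      ⟨.inl e, .inl ⟨by simp [extend, hx], by simp [extend]⟩⟩
    exact .tail (.single hx0) ⟨.inr 0, .inl ⟨by simp [extend], by simp [extend, hy]⟩⟩
  by_cases h2 : e = e2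
  · subst h2
    have hx1 : (G.extend e1 e).Adj (.inl x) (.inr 1) :=
      ⟨.inl e, .inl ⟨by simp [extend, hx], by simp [extend, Ne.symm h12]⟩⟩
    exact .tail (.single hx1) ⟨.inr 1, .inl ⟨by simp [extend], by simp [extend, hy]⟩⟩
  exact .single ⟨.inl e, .inl ⟨by simp [extend, hx], by simp [extend, h1, h2, hy]⟩⟩

theorem extend_conn (hcl : G.Closed) (hconn : G.Conn) (h12 : e1 ≠ e2) :
    (G.extend e1 e2).Conn := by
  have hlift (x y : G.V) (hxy : G.Adj x y) :
      Relation.ReflTransGen (G.extend e1 e2).Adj (.inl x) (.inl y) := by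
    obtain ⟨e, ⟨hx, hy⟩ | ⟨hy, hx⟩⟩ := hxy
    · exact extend_reflTransGen_adj_of_fst_snd h12 hx hy
    · exact reflTransGen_adj_symm (extend_reflTransGen_adj_of_fst_snd h12 hy hx)
  have hroot (z : (G.extend e1 e2).V) :
      ∃ x, Relation.ReflTransGen (G.extend e1 e2).Adj z (.inl x) := by
    obtain x | i := z
    · exact ⟨x, .refl⟩
    obtain ⟨y, hy⟩ := Option.ne_none_iff_exists'.1 (hcl (if i = 0 then e1 else e2) false)
    refine ⟨y, .single ⟨.inr i.castSucc, .inl ⟨?_, ?_⟩⟩⟩ <;> fin_cases i <;>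
      simp_all [extend, endAt]
  intro a b
  obtain ⟨x, hx⟩ := hroot a
  obtain ⟨y, hy⟩ := hroot b
  exact (hx.trans ((hconn x y).lift' _ hlift)).trans (reflTransGen_adj_symm hy)

theorem delPair_colourable_of_extend_colourable (h : (G.extend e1 e2).Colourable) :
    (G.delPair e1 e2).Colourable := by
  obtain ⟨ψ, hψ⟩ := h
  have hψinj := (proper_iff_properEnds.1 hψ).2
  refine ⟨fun f => ψ (.inl f.1), proper_iff_properEnds.2 ⟨fun _ => hψ.1 _, fun v p q hpq => ?_⟩⟩
  let lift (r : (G.delPair e1 e2).Ends v) : (G.extend e1 e2).Ends (.inl v) :=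
    ⟨(.inl r.1.1.1, r.1.2), by
      rw [extend_endAt_inl_of_ne r.1.1.2.1 r.1.1.2.2]; exact congrArg (Option.map _) r.2⟩
  obtain ⟨hf, hb⟩ := Prod.mk.inj (congrArg Subtype.val (@hψinj (.inl v) (lift p) (lift q) hpq))
  exact Subtype.ext (Prod.ext (Subtype.ext (Sum.inl_injective hf)) hb)

theorem extend_colourable_of_properEnds (h12 : e1 ≠ e2) {A : G.E × Bool → Klein}
    (hA : G.ProperEnds A) (hconst : ∀ f, f ≠ e1 → f ≠ e2 → A (f, true) = A (f, false))
    (hk : A (e1, true) + A (e1, false) = A (e2, true) + A (e2, false))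
    (hk0 : A (e1, true) + A (e1, false) ≠ 0) : (G.extend e1 e2).Colourable := by
  let ψ : (G.extend e1 e2).E → Klein :=
    Sum.elim (fun f => A (f, true)) ![A (e1, false), A (e2, false), A (e1, true) + A (e1, false)]
  have hψ : ∀ q, ψ (liftEnd e1 e2 q).1 = A q := by
    rintro ⟨f, _ | _⟩
    · by_cases h1 : f = e1
      · subst h1; simp [ψ, liftEnd]
      by_cases h2 : f = e2
      · subst h2; simp [ψ, liftEnd, h1]
      simp [ψ, liftEnd, h1, h2, hconst f h1 h2]
    · rfl
  obtain ⟨h1ab, h1ak, h1bk⟩ :=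
    Klein.pairwise_ne_of_add_eq (hA.1 (e1, true)) (hA.1 (e1, false)) hk0 rfl
  obtain ⟨h2ab, h2ak, h2bk⟩ :=
    Klein.pairwise_ne_of_add_eq (hA.1 (e2, true)) (hA.1 (e2, false)) hk0 hk.symm
  refine ⟨ψ, proper_iff_properEnds.2 ⟨?_, ?_⟩⟩
  · rintro ⟨f | i, b⟩
    · exact hA.1 _
    · fin_cases i
      exacts [hA.1 _, hA.1 _, hk0]
  rintro (v | w)
  · rintro ⟨p, hp⟩ ⟨p', hp'⟩ h
    obtain ⟨q, rfl⟩ := exists_liftEnd_of_extend_endAt h12 hp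
    obtain ⟨q', rfl⟩ := exists_liftEnd_of_extend_endAt h12 hp'
    rw [extend_endAt_liftEnd] at hp hp'
    have := @hA.2 v ⟨q, Option.map_injective Sum.inl_injective hp⟩
      ⟨q', Option.map_injective Sum.inl_injective hp'⟩ (by simpa only [hψ] using h)
    exact Subtype.ext (congrArg (liftEnd e1 e2 ∘ Subtype.val) this)
  fin_cases w
  · exact injective_ends_of_endAt_iff (A := fun p => ψ p.1)
      (fun _ => extend_endAt_eq_inr_zero) h1ab h1ak h1bk
  · exact injective_ends_of_endAt_iff (A := fun p => ψ p.1)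
      (fun _ => extend_endAt_eq_inr_one h12) h2ab h2ak h2bk

theorem extend_colourable_of_delPair_colourable (hG : G.IsSnark) (h12 : e1 ≠ e2)
    (h : (G.delPair e1 e2).Colourable) : (G.extend e1 e2).Colourable := by
  obtain ⟨hcub, hcl, -, hncol⟩ := hG
  obtain ⟨A, hA, hconst⟩ := exists_properEnds_of_delPair_colourable hcub hcl h
  have hk : A (e1, true) + A (e1, false) = A (e2, true) + A (e2, false) := by
    have hsum := hA.sum_eq_zero hcub hcl
    rwa [sum_ends_eq_of_forall_ne h12 hconst, CharTwo.add_eq_zero] at hsum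
  by_cases hk0 : A (e1, true) + A (e1, false) = 0
  · refine absurd ⟨_, proper_of_properEnds hA fun f => ?_⟩ hncol
    by_cases h1 : f = e1
    · exact h1 ▸ CharTwo.add_eq_zero.1 hk0
    by_cases h2 : f = e2
    · exact h2 ▸ CharTwo.add_eq_zero.1 (hk ▸ hk0)
    exact hconst f h1 h2
  · exact extend_colourable_of_properEnds h12 hA hconst hk hk0

end Extension

end Multipole

/-- Let `G` be a snark and `e₁ ≠ e₂` two of its edges.  The I-extension
`G(e₁,e₂)` — subdivide `e₁` and `e₂` each with a new vertex and join the two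
new vertices by a new edge — is a snark if and only if the pair `{e₁,e₂}` is
removable, i.e. `G − {e₁,e₂}` is not 3-edge-colourable. -/
theorem extension_snark_iff_removable (G : Multipole) (hG : G.IsSnark)
    (e1 e2 : G.E) (h12 : e1 ≠ e2) :
    (G.extend e1 e2).IsSnark ↔ ¬ (G.delPair e1 e2).Colourable := by
  refine ⟨fun hext hcol => hext.2.2.2 (G.extend_colourable_of_delPair_colourable hG h12 hcol),
    fun hrem => ?_⟩
  obtain ⟨hcub, hcl, hconn, -⟩ := hG
  exact ⟨Multipole.extend_isCubic hcub h12, Multipole.extend_closed hcl,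
    Multipole.extend_conn hcl hconn h12,
    fun hcol => hrem (Multipole.delPair_colourable_of_extend_colourable hcol)⟩
end

section
/- Let G be a snark and let uwv be a path of length two in G. Let N be the multipole obtained by removing the vertices u, w, v, with 2-connectors I and O consisting of the semiedges formerly incident with u and v respectively, and residual semiedge r formerly incident with w. Then for every proper 3-edge-colouring φ of N, exactly one of φ*(I) and φ*(O) equals 0, and the nonzero one among them equals φ(r). Consequently Col(N) ⊆ {(x,x,a,b,a+b), (a,b,x,x,a+b) ∈ K^5 : a ≠ b}. -/
namespace NegHelp
open Multipole Finset
open scoped Classical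

/-! ### Klein arithmetic -/

theorem klein_add_self (a : Klein) : a + a = 0 := by
  revert a; decide

theorem klein_sum3 {a b c : Klein} (ha : a ≠ 0) (hb : b ≠ 0) (hc : c ≠ 0)
    (hab : a ≠ b) (hac : a ≠ c) (hbc : b ≠ c) : a + b + c = 0 := by
  revert a b c; decide

theorem klein_add_ne_left {a b : Klein} (hb : b ≠ 0) : a + b ≠ a := by
  revert a b; decide

theorem klein_ne_of_add_ne_zero {a b : Klein} (h : a + b ≠ 0) : a ≠ b := by
  revert a b; decide

theorem klein_eq_of_add_eq_zero {a b : Klein} (h : a + b = 0) : a = b := by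
  revert a b; decide

theorem klein_pairwise_of_sum3 {a b c : Klein} (ha : a ≠ 0) (hb : b ≠ 0) (hc : c ≠ 0)
    (h : a + b + c = 0) : a ≠ b ∧ a ≠ c ∧ b ≠ c := by
  revert a b c; decide

/-- Two fixed nonzero colours distinct from a given nonzero colour. -/
def f1 (a : Klein) : Klein := if a = (1, 0) then (0, 1) else (1, 0)
def f2 (a : Klein) : Klein := if a = (1, 1) then (0, 1) else (1, 1)

theorem f_spec {a : Klein} (ha : a ≠ 0) :
    f1 a ≠ 0 ∧ f2 a ≠ 0 ∧ f1 a ≠ a ∧ f2 a ≠ a ∧ f1 a ≠ f2 a := by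
  revert a; decide

variable (G : Multipole) (S : Finset G.V)

/-! ### The edge predicate of `delVerts` -/

def inN (e : G.E) : Prop := ∃ (b : Bool) (x : G.V), G.endAt e b = some x ∧ x ∉ S

theorem delVerts_endAt_some (e : (G.delVerts S).E) (b : Bool) (x : G.V) (hx : x ∉ S) :
    (G.delVerts S).endAt e b = some ⟨x, hx⟩ ↔ G.endAt e.1 b = some x := by
  cases b
  · show (G.delVerts S).snd e = some ⟨x, hx⟩ ↔ G.snd e.1 = some x
    simp only [Multipole.delVerts]
    rcases h : G.snd e.1 with _ | y
    · simp
    · by_cases hy : y ∈ S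
      · simp only [hy, dif_pos]
        constructor
        · intro hc; exact absurd hc (by simp)
        · intro hc; cases hc; exact absurd hy hx
      · simp [hy, Subtype.ext_iff]
  · show (G.delVerts S).fst e = some ⟨x, hx⟩ ↔ G.fst e.1 = some x
    simp only [Multipole.delVerts]
    rcases h : G.fst e.1 with _ | y
    · simp
    · by_cases hy : y ∈ S
      · simp only [hy, dif_pos]
        constructor
        · intro hc; exact absurd hc (by simp)
        · intro hc; cases hc; exact absurd hy hx
      · simp [hy, Subtype.ext_iff]

theorem inN_of_end {e : G.E} {b : Bool} {x : G.V} (h : G.endAt e b = some x) (hx : x ∉ S) :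
    inN G S e := ⟨b, x, h, hx⟩

/-! ### The colouring transported to `G` -/

variable (φ : (G.delVerts S).E → Klein)

noncomputable def Phi (e : G.E) : Klein :=
  if h : inN G S e then φ ⟨e, h⟩ else 0

theorem Phi_of_inN {e : G.E} (h : inN G S e) : Phi G S φ e = φ ⟨e, h⟩ := dif_pos h

theorem Phi_of_not_inN {e : G.E} (h : ¬ inN G S e) : Phi G S φ e = 0 := dif_neg h

theorem Phi_ne_zero (hφ : (G.delVerts S).Proper φ) {e : G.E} (h : inN G S e) :
    Phi G S φ e ≠ 0 := by
  rw [Phi_of_inN G S φ h]; exact hφ.1 _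

/-- Distinct ends at a vertex outside `S` receive distinct colours. -/
theorem ends_distinct (hφ : (G.delVerts S).Proper φ) {x : G.V} (hx : x ∉ S)
    {p q : G.E × Bool} (hp : G.endAt p.1 p.2 = some x) (hq : G.endAt q.1 q.2 = some x)
    (hne : p ≠ q) : Phi G S φ p.1 ≠ Phi G S φ q.1 := by
  have hpN : inN G S p.1 := inN_of_end G S hp hx
  have hqN : inN G S q.1 := inN_of_end G S hq hx
  rw [Phi_of_inN G S φ hpN, Phi_of_inN G S φ hqN]
  refine hφ.2 ⟨x, hx⟩ (⟨p.1, hpN⟩, p.2) (⟨q.1, hqN⟩, q.2)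
    ((delVerts_endAt_some G S _ _ _ hx).2 hp) ((delVerts_endAt_some G S _ _ _ hx).2 hq) ?_
  intro hc
  apply hne
  have h1 : p.1 = q.1 := congrArg (fun z => z.1.1) hc
  have h2 : p.2 = q.2 := congrArg (fun z => z.2) hc
  exact Prod.ext h1 h2

end NegHelp

namespace NegHelp
open Multipole Finset
open scoped Classical

variable (G : Multipole) (S : Finset G.V) (φ : (G.delVerts S).E → Klein)

/-! ### End sets -/

noncomputable def endsAt (x : G.V) : Finset (G.E × Bool) :=
  univ.filter fun p => G.endAt p.1 p.2 = some x

noncomputable def semiAt (x : G.V) : Finset (G.E × Bool) :=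
  (endsAt G x).filter fun p => inN G S p.1

noncomputable def inAt (x : G.V) : Finset (G.E × Bool) :=
  (endsAt G x).filter fun p => ¬ inN G S p.1

theorem endsAt_card (hcub : G.IsCubic) (x : G.V) : (endsAt G x).card = 3 := hcub x

theorem semiAt_card_add (hcub : G.IsCubic) (x : G.V) :
    (semiAt G S x).card + (inAt G S x).card = 3 := by
  rw [← endsAt_card G hcub x]
  exact Finset.card_filter_add_card_filter_not _

theorem mem_endsAt {x : G.V} {p : G.E × Bool} :
    p ∈ endsAt G x ↔ G.endAt p.1 p.2 = some x := by simp [endsAt]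

theorem mem_semiAt {x : G.V} {p : G.E × Bool} :
    p ∈ semiAt G S x ↔ G.endAt p.1 p.2 = some x ∧ inN G S p.1 := by
  simp [semiAt, mem_endsAt, and_comm]

theorem mem_inAt {x : G.V} {p : G.E × Bool} :
    p ∈ inAt G S x ↔ G.endAt p.1 p.2 = some x ∧ ¬ inN G S p.1 := by
  simp [inAt, mem_endsAt]

/-! ### connFlow in terms of `Phi` -/

theorem connFlow_eq (x : G.V) :
    G.connFlow S φ x
      = ∑ p : G.E × Bool, if G.endAt p.1 p.2 = some x then Phi G S φ p.1 else 0 := by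
  have h1 : (∑ p : G.E × Bool, if G.endAt p.1 p.2 = some x then Phi G S φ p.1 else 0)
      = ∑ e : G.E, ((if G.fst e = some x then Phi G S φ e else 0)
          + (if G.snd e = some x then Phi G S φ e else 0)) := by
    rw [Fintype.sum_prod_type]
    refine Finset.sum_congr rfl fun e _ => ?_
    rw [Fintype.sum_bool]
    rfl
  rw [h1]
  have h2 : ∀ e : G.E, e ∈ (univ : Finset G.E) → e ∉ univ.filter (inN G S) →
      ((if G.fst e = some x then Phi G S φ e else 0)
        + (if G.snd e = some x then Phi G S φ e else 0)) = 0 := by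
    intro e _ he
    have : ¬ inN G S e := by simpa using he
    rw [Phi_of_not_inN G S φ this]
    simp
  rw [← Finset.sum_subset (Finset.subset_univ _) h2]
  have h3 : (∑ e ∈ univ.filter (inN G S),
        ((if G.fst e = some x then Phi G S φ e else 0)
          + (if G.snd e = some x then Phi G S φ e else 0)))
      = ∑ e : (G.delVerts S).E,
          ((if G.fst e.1 = some x then Phi G S φ e.1 else 0)
            + (if G.snd e.1 = some x then Phi G S φ e.1 else 0)) :=
    @Finset.sum_subtype _ _ _ (inN G S) (G.delVerts S).instEF _ (fun e => by simp) _
  rw [h3, Multipole.connFlow]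
  refine Finset.sum_congr rfl fun e _ => ?_
  rw [Phi_of_inN G S φ e.2]
  rfl

theorem connFlow_eq_semiSum (x : G.V) :
    G.connFlow S φ x = ∑ p ∈ semiAt G S x, Phi G S φ p.1 := by
  rw [connFlow_eq, ← Finset.sum_filter]
  have : (univ.filter fun p : G.E × Bool => G.endAt p.1 p.2 = some x) = endsAt G x := rfl
  rw [this]
  symm
  refine Finset.sum_subset (Finset.filter_subset _ _) ?_
  intro p _ hp
  have hpe : p ∈ endsAt G x := by assumption
  have : ¬ inN G S p.1 := fun h => hp (by rw [semiAt, Finset.mem_filter]; exact ⟨hpe, h⟩)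
  exact Phi_of_not_inN G S φ this

end NegHelp

namespace NegHelp
open Multipole Finset
open scoped Classical

variable (G : Multipole) (S : Finset G.V) (φ : (G.delVerts S).E → Klein)

/-- Helper: identify a 3-element end set. -/
theorem endsAt_eq_three (hcub : G.IsCubic) {x : G.V} {a b c : G.E × Bool}
    (ha : G.endAt a.1 a.2 = some x) (hb : G.endAt b.1 b.2 = some x)
    (hc : G.endAt c.1 c.2 = some x) (hab : a ≠ b) (hac : a ≠ c) (hbc : b ≠ c) :
    endsAt G x = ({a, b, c} : Finset (G.E × Bool)) := by
  have hsub : ({a, b, c} : Finset (G.E × Bool)) ⊆ endsAt G x := by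
    intro p hp
    rw [mem_endsAt]
    rcases Finset.mem_insert.1 hp with rfl | hp
    · exact ha
    rcases Finset.mem_insert.1 hp with rfl | hp
    · exact hb
    · rw [Finset.mem_singleton] at hp; subst hp; exact hc
  have hcard : ({a, b, c} : Finset (G.E × Bool)).card = 3 := by
    rw [Finset.card_insert_of_notMem (by simp [hab, hac]),
      Finset.card_insert_of_notMem (by simp [hbc]), Finset.card_singleton]
  exact (Finset.eq_of_subset_of_card_le hsub (by rw [endsAt_card G hcub x, hcard])).symm

theorem mem_three {α : Type*} [DecidableEq α] {s : Finset α} {a b c p : α}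
    (h : s = {a, b, c}) (hp : p ∈ s) : p = a ∨ p = b ∨ p = c := by
  subst h; simpa using hp

theorem distinct_on_three {α β : Type*} {a b c p q : α} {f : α → β}
    (hpq : p ≠ q) (hp : p = a ∨ p = b ∨ p = c) (hq : q = a ∨ q = b ∨ q = c)
    (hab : f a ≠ f b) (hac : f a ≠ f c) (hbc : f b ≠ f c) : f p ≠ f q := by
  rcases hp with rfl | rfl | rfl <;> rcases hq with rfl | rfl | rfl <;>
    first
      | exact absurd rfl hpq
      | exact hab | exact hab.symm | exact hac | exact hac.symm
      | exact hbc | exact hbc.symm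

/-- Sum of colours of ends at a vertex outside `S` vanishes. -/
theorem vertexSum_zero (hcub : G.IsCubic) (hφ : (G.delVerts S).Proper φ)
    {x : G.V} (hx : x ∉ S) :
    (∑ p : G.E × Bool, if G.endAt p.1 p.2 = some x then Phi G S φ p.1 else 0) = 0 := by
  rw [← Finset.sum_filter]
  have he : (univ.filter fun p : G.E × Bool => G.endAt p.1 p.2 = some x) = endsAt G x := rfl
  rw [he]
  obtain ⟨a, b, c, hab, hac, hbc, h3⟩ := Finset.card_eq_three.1 (endsAt_card G hcub x)
  have ha : G.endAt a.1 a.2 = some x := mem_endsAt G |>.1 (h3 ▸ by simp)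
  have hb : G.endAt b.1 b.2 = some x := mem_endsAt G |>.1 (h3 ▸ by simp)
  have hc : G.endAt c.1 c.2 = some x := mem_endsAt G |>.1 (h3 ▸ by simp)
  rw [h3, Finset.sum_insert (by simp [hab, hac]), Finset.sum_insert (by simp [hbc]),
    Finset.sum_singleton, ← add_assoc]
  exact klein_sum3
    (Phi_ne_zero G S φ hφ (inN_of_end G S ha hx))
    (Phi_ne_zero G S φ hφ (inN_of_end G S hb hx))
    (Phi_ne_zero G S φ hφ (inN_of_end G S hc hx))
    (ends_distinct G S φ hφ hx ha hb hab)
    (ends_distinct G S φ hφ hx ha hc hac)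
    (ends_distinct G S φ hφ hx hb hc hbc)

/-- The sum of the connector flows over `S` is zero. -/
theorem sum_connFlow_zero (hcub : G.IsCubic) (hcl : G.Closed)
    (hφ : (G.delVerts S).Proper φ) :
    ∑ x ∈ S, G.connFlow S φ x = 0 := by
  have key : ∑ x : G.V, (∑ p : G.E × Bool,
      if G.endAt p.1 p.2 = some x then Phi G S φ p.1 else 0) = 0 := by
    rw [Finset.sum_comm]
    have hper : ∀ p : G.E × Bool,
        (∑ x : G.V, if G.endAt p.1 p.2 = some x then Phi G S φ p.1 else 0) = Phi G S φ p.1 := by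
      intro p
      obtain ⟨y, hy⟩ := Option.ne_none_iff_exists'.1 (hcl p.1 p.2)
      rw [Finset.sum_eq_single y]
      · rw [if_pos hy]
      · intro z _ hz
        rw [if_neg]
        intro hc
        rw [hy] at hc
        injection hc with hc'
        exact hz hc'.symm
      · intro h; exact absurd (Finset.mem_univ y) h
    rw [Finset.sum_congr rfl fun p _ => hper p, Fintype.sum_prod_type]
    have : ∀ e : G.E, (∑ b : Bool, Phi G S φ (e, b).1) = 0 := by
      intro e
      rw [Fintype.sum_bool]
      exact klein_add_self _
    rw [Finset.sum_congr rfl fun e _ => this e, Finset.sum_const, smul_zero]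
  have hvan : ∀ x ∈ (univ : Finset G.V), x ∉ S →
      (∑ p : G.E × Bool, if G.endAt p.1 p.2 = some x then Phi G S φ p.1 else 0) = 0 :=
    fun x _ hx => vertexSum_zero G S φ hcub hφ hx
  calc ∑ x ∈ S, G.connFlow S φ x
      = ∑ x ∈ S, (∑ p : G.E × Bool,
          if G.endAt p.1 p.2 = some x then Phi G S φ p.1 else 0) :=
        Finset.sum_congr rfl fun x _ => connFlow_eq G S φ x
    _ = ∑ x : G.V, (∑ p : G.E × Bool,
          if G.endAt p.1 p.2 = some x then Phi G S φ p.1 else 0) :=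
        Finset.sum_subset (Finset.subset_univ S) hvan
    _ = 0 := key

end NegHelp

namespace NegHelp
open Multipole Finset
open scoped Classical

variable (G : Multipole)

theorem parity (hcub : G.IsCubic) (hcl : G.Closed) {u w v : G.V}
    (huw : u ≠ w) (hwv : w ≠ v) (huv : u ≠ v) :
    (semiAt G ({u, w, v} : Finset G.V) u).card
      + (semiAt G ({u, w, v} : Finset G.V) w).card
      + (semiAt G ({u, w, v} : Finset G.V) v).card
      + 2 * (univ.filter fun e : G.E => ¬ inN G ({u, w, v} : Finset G.V) e).card = 9 := by
  set S : Finset G.V := {u, w, v} with hS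
  have h9 : ((semiAt G S u).card + (inAt G S u).card)
      + ((semiAt G S w).card + (inAt G S w).card)
      + ((semiAt G S v).card + (inAt G S v).card) = 9 := by
    rw [semiAt_card_add G S hcub u, semiAt_card_add G S hcub w, semiAt_card_add G S hcub v]
  have hdisj : ∀ {x y : G.V}, x ≠ y → Disjoint (inAt G S x) (inAt G S y) := by
    intro x y hxy
    rw [Finset.disjoint_left]
    intro p hp hq
    rw [mem_inAt] at hp hq
    have := hp.1.symm.trans hq.1
    injection this with h'
    exact hxy h'
  have hdisj2 : Disjoint (inAt G S u ∪ inAt G S w) (inAt G S v) := by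
    rw [Finset.disjoint_union_left]
    exact ⟨hdisj huv, hdisj hwv⟩
  have hU : inAt G S u ∪ inAt G S w ∪ inAt G S v
      = univ.filter (fun p : G.E × Bool => ¬ inN G S p.1) := by
    ext p
    simp only [Finset.mem_union, mem_inAt, Finset.mem_filter, Finset.mem_univ, true_and]
    constructor
    · rintro ((⟨_, h⟩ | ⟨_, h⟩) | ⟨_, h⟩) <;> exact h
    · intro h
      obtain ⟨y, hy⟩ := Option.ne_none_iff_exists'.1 (hcl p.1 p.2)
      have hyS : y ∈ S := by
        by_contra hyS
        exact h ⟨p.2, y, hy, hyS⟩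
      have : y = u ∨ y = w ∨ y = v := by simpa [hS] using hyS
      rcases this with rfl | rfl | rfl
      · exact Or.inl (Or.inl ⟨hy, h⟩)
      · exact Or.inl (Or.inr ⟨hy, h⟩)
      · exact Or.inr ⟨hy, h⟩
  have hcard1 : (inAt G S u).card + (inAt G S w).card + (inAt G S v).card
      = (univ.filter fun p : G.E × Bool => ¬ inN G S p.1).card := by
    rw [← hU, Finset.card_union_of_disjoint hdisj2, Finset.card_union_of_disjoint (hdisj huw)]
  have hprod : (univ.filter fun p : G.E × Bool => ¬ inN G S p.1)
      = (univ.filter fun e : G.E => ¬ inN G S e) ×ˢ (univ : Finset Bool) := by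
    ext p
    simp [Finset.mem_product]
  have hcard2 : (univ.filter fun p : G.E × Bool => ¬ inN G S p.1).card
      = 2 * (univ.filter fun e : G.E => ¬ inN G S e).card := by
    rw [hprod, Finset.card_product]
    simp [Nat.mul_comm]
  omega

end NegHelp

namespace NegHelp
open Multipole Finset
open scoped Classical

variable (G : Multipole) (S : Finset G.V)

theorem joins_ends {e : G.E} {x y : G.V} (h : G.Joins e x y) :
    ∃ b : Bool, G.endAt e b = some x ∧ G.endAt e (!b) = some y := by
  rcases h with ⟨h1, h2⟩ | ⟨h1, h2⟩
  · exact ⟨true, h1, h2⟩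
  · exact ⟨false, h2, h1⟩

theorem side_eq {e : G.E} {b c : Bool} {x y : G.V} (hxy : y ≠ x)
    (hb : G.endAt e b = some x) (hb' : G.endAt e (!b) = some y)
    (hc : G.endAt e c = some x) : c = b := by
  by_contra h
  have hcb : c = !b := by revert h; cases b <;> cases c <;> simp
  rw [hcb, hb'] at hc
  injection hc with h'
  exact hxy h'

theorem not_inN_of_joins {e : G.E} {x y : G.V} (hx : x ∈ S) (hy : y ∈ S)
    (h : G.Joins e x y) : ¬ inN G S e := by
  rintro ⟨b, z, hz, hzS⟩
  obtain ⟨c, hc1, hc2⟩ := joins_ends G h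
  by_cases hbc : b = c
  · subst hbc; rw [hz] at hc1; injection hc1 with h'; exact hzS (h' ▸ hx)
  · have : b = !c := by revert hbc; cases b <;> cases c <;> simp
    subst this; rw [hz] at hc2; injection hc2 with h'; exact hzS (h' ▸ hy)

variable (φ : (G.delVerts S).E → Klein)

theorem flow_of_card_zero {x : G.V} (h : (semiAt G S x).card = 0) :
    G.connFlow S φ x = 0 := by
  rw [connFlow_eq_semiSum, Finset.card_eq_zero.1 h, Finset.sum_empty]

theorem flow_of_card_one {x : G.V} (h : (semiAt G S x).card = 1) :
    ∃ p : G.E × Bool, semiAt G S x = {p} ∧ G.connFlow S φ x = Phi G S φ p.1 := by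
  obtain ⟨p, hp⟩ := Finset.card_eq_one.1 h
  exact ⟨p, hp, by rw [connFlow_eq_semiSum, hp, Finset.sum_singleton]⟩

theorem flow_of_card_two {x : G.V} (h : (semiAt G S x).card = 2) :
    ∃ p q : G.E × Bool, p ≠ q ∧ semiAt G S x = {p, q} ∧
      G.connFlow S φ x = Phi G S φ p.1 + Phi G S φ q.1 := by
  obtain ⟨p, q, hpq, hs⟩ := Finset.card_eq_two.1 h
  refine ⟨p, q, hpq, hs, ?_⟩
  rw [connFlow_eq_semiSum, hs, Finset.sum_insert (by simp [hpq]), Finset.sum_singleton]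

theorem card_pos_of_flow_ne {x : G.V} (h : G.connFlow S φ x ≠ 0) :
    (semiAt G S x).card ≠ 0 := by
  intro hc
  exact h (flow_of_card_zero G S φ hc)

/-- If a colouring agrees with `φ` on `N`-edges and is proper at vertices of `S`,
then `G` is colourable. -/
theorem proper_extension (hcub : G.IsCubic) (hφ : (G.delVerts S).Proper φ)
    (ψ : G.E → Klein)
    (hpsiN : ∀ e : G.E, inN G S e → ψ e = Phi G S φ e)
    (hnz : ∀ e, ψ e ≠ 0)
    (hS : ∀ x ∈ S, ∀ p q : G.E × Bool, G.endAt p.1 p.2 = some x →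
      G.endAt q.1 q.2 = some x → p ≠ q → ψ p.1 ≠ ψ q.1) :
    G.Colourable := by
  refine ⟨ψ, hnz, ?_⟩
  intro x p q hp hq hpq
  by_cases hx : x ∈ S
  · exact hS x hx p q hp hq hpq
  · rw [hpsiN p.1 (inN_of_end G S hp hx), hpsiN q.1 (inN_of_end G S hq hx)]
    exact ends_distinct G S φ hφ hx hp hq hpq

end NegHelp

namespace NegHelp
open Multipole Finset
open scoped Classical

theorem exists_extra {α : Type*} {s t : Finset α} (h : t.card < s.card) :
    ∃ p ∈ s, p ∉ t := by
  by_contra hc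
  push_neg at hc
  exact absurd (Finset.card_le_card hc) (not_le.2 h)

theorem klein_mid {a b c : Klein} (h : a + b + c = 0) : b = a + c := by
  revert a b c; decide

theorem klein_pair_ne {a b : Klein} (ha : a ≠ 0) (hb : b ≠ 0) (hab : a + b ≠ 0) :
    a + b ≠ a ∧ a + b ≠ b ∧ a ≠ b := by revert a b; decide

variable (G : Multipole)

theorem end_of_joins {e : G.E} {x y : G.V} (h : G.Joins e x y) {c : Bool} {z : G.V}
    (hc : G.endAt e c = some z) : z = x ∨ z = y := by
  obtain ⟨b, h1, h2⟩ := joins_ends G h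
  by_cases hbc : c = b
  · subst hbc; rw [h1] at hc; injection hc with h'; exact Or.inl h'.symm
  · have : c = !b := by revert hbc; cases b <;> cases c <;> simp
    subst this; rw [h2] at hc; injection hc with h'; exact Or.inr h'.symm

end NegHelp

namespace NegHelp

theorem pair_ne {α β : Type*} {p q : α × β} (h : p.1 ≠ q.1) : p ≠ q :=
  fun hpq => h (congrArg Prod.fst hpq)

theorem pair_ne_of_inN (G : Multipole) (S : Finset G.V) {e : G.E} {b : Bool}
    {q : G.E × Bool} (hN : ¬ inN G S e) (hq : inN G S q.1) : (e, b) ≠ q := by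
  intro h
  apply hN
  have he : e = q.1 := congrArg Prod.fst h
  rw [he]
  exact hq

end NegHelp

open NegHelp Finset in
/-- **Negators.**  Let `G` be a snark and `u-w-v` a path of length two in `G`.
Let `N = G − {u,w,v}` be the resulting negator with input connector `I` (the
semiedges formerly at `u`), output connector `O` (formerly at `v`) and residual
semiedge `r` (formerly at `w`).  Then for every proper 3-edge-colouring `φ` of
`N`, exactly one of the flows `φ*(I)`, `φ*(O)` is zero, and the nonzero one
equals `φ(r)`.  (Since nonzero Klein colours `a,b` satisfy `a + b = 0 ↔ a = b`,
this is precisely the statement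
`Col(N) ⊆ {(x,x,a,b,a+b), (a,b,x,x,a+b) : a ≠ b}`.) -/
theorem negator_flow (G : Multipole) (hG : G.IsSnark) (u w v : G.V)
    (huw : u ≠ w) (hwv : w ≠ v) (huv : u ≠ v)
    (e1 : G.E) (he1 : G.Joins e1 u w) (e2 : G.E) (he2 : G.Joins e2 w v)
    (φ : (G.delVerts {u, w, v}).E → Klein)
    (hφ : (G.delVerts {u, w, v}).Proper φ) :
    (G.connFlow {u, w, v} φ u = 0 ∧ G.connFlow {u, w, v} φ v ≠ 0 ∧
       G.connFlow {u, w, v} φ v = G.connFlow {u, w, v} φ w) ∨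
    (G.connFlow {u, w, v} φ v = 0 ∧ G.connFlow {u, w, v} φ u ≠ 0 ∧
       G.connFlow {u, w, v} φ u = G.connFlow {u, w, v} φ w) := by
  classical
  obtain ⟨hcub, hcl, hconn, hncol⟩ := hG
  revert hφ
  revert φ
  set S : Finset G.V := {u, w, v} with hS
  intro φ hφ
  have huS : u ∈ S := by simp [hS]
  have hwS : w ∈ S := by simp [hS]
  have hvS : v ∈ S := by simp [hS]
  -- sides of e1 and e2
  obtain ⟨b1, hb1u, hb1w⟩ := joins_ends G he1
  obtain ⟨b2, hb2w, hb2v⟩ := joins_ends G he2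
  have hNe1 : ¬ inN G S e1 := not_inN_of_joins G S huS hwS he1
  have hNe2 : ¬ inN G S e2 := not_inN_of_joins G S hwS hvS he2
  have he12 : e1 ≠ e2 := by
    intro h; subst h
    rcases end_of_joins G he1 hb2v with h' | h'
    · exact huv h'.symm
    · exact hwv h'.symm
  -- total flow identity
  have htot : G.connFlow S φ u + G.connFlow S φ w + G.connFlow S φ v = 0 := by
    have h0 := sum_connFlow_zero G S φ hcub hcl hφ
    have hexp : ∀ f : G.V → Klein, ∑ x ∈ S, f x = f u + f w + f v := by
      intro f
      rw [hS, Finset.sum_insert (by simp [huw, huv]), Finset.sum_insert (by simp [hwv]),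
        Finset.sum_singleton, ← add_assoc]
    rw [hexp] at h0
    exact h0
  -- parity
  have hpar : (semiAt G S u).card + (semiAt G S w).card + (semiAt G S v).card
      + 2 * (univ.filter fun e : G.E => ¬ inN G S e).card = 9 :=
    parity G hcub hcl huw hwv huv
  -- basic card bounds
  have hcu : (semiAt G S u).card + (inAt G S u).card = 3 := semiAt_card_add G S hcub u
  have hcw : (semiAt G S w).card + (inAt G S w).card = 3 := semiAt_card_add G S hcub w
  have hcv : (semiAt G S v).card + (inAt G S v).card = 3 := semiAt_card_add G S hcub v
  have hA1u : (e1, b1) ∈ inAt G S u := (mem_inAt G S).2 ⟨hb1u, hNe1⟩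
  have hA1w : (e1, !b1) ∈ inAt G S w := (mem_inAt G S).2 ⟨hb1w, hNe1⟩
  have hA2w : (e2, b2) ∈ inAt G S w := (mem_inAt G S).2 ⟨hb2w, hNe2⟩
  have hA2v : (e2, !b2) ∈ inAt G S v := (mem_inAt G S).2 ⟨hb2v, hNe2⟩
  have hiu : 1 ≤ (inAt G S u).card := Finset.card_pos.2 ⟨_, hA1u⟩
  have hiv : 1 ≤ (inAt G S v).card := Finset.card_pos.2 ⟨_, hA2v⟩
  have hiw : 2 ≤ (inAt G S w).card := by
    have hsub : ({(e1, !b1), (e2, b2)} : Finset (G.E × Bool)) ⊆ inAt G S w := by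
      intro p hp
      rcases Finset.mem_insert.1 hp with rfl | hp
      · exact hA1w
      · rw [Finset.mem_singleton] at hp; subst hp; exact hA2w
    have h2 : ({(e1, !b1), (e2, b2)} : Finset (G.E × Bool)).card = 2 := by
      rw [Finset.card_insert_of_notMem (by simp [he12]), Finset.card_singleton]
    rw [← h2]
    exact Finset.card_le_card hsub
  -- no semiedge at w forces zero flow; one semiedge forces nonzero flow
  have hflow1 : ∀ x : G.V, (semiAt G S x).card = 1 → G.connFlow S φ x ≠ 0 := by
    intro x hx
    obtain ⟨p, hps, hpf⟩ := flow_of_card_one G S φ hx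
    have hpm : p ∈ semiAt G S x := hps ▸ Finset.mem_singleton_self p
    have := ((mem_semiAt G S).1 hpm).2
    rw [hpf]
    exact Phi_ne_zero G S φ hφ this
  by_cases hu0 : G.connFlow S φ u = 0 <;> by_cases hv0 : G.connFlow S φ v = 0
  · -- scenario A : both zero, impossible by parity
    exfalso
    have hw0 : G.connFlow S φ w = 0 := by
      rw [hu0, hv0] at htot; simpa using htot
    have hkw : (semiAt G S w).card = 0 := by
      have hle : (semiAt G S w).card ≤ 1 := by omega
      rcases Nat.lt_or_ge (semiAt G S w).card 1 with h | h
      · omega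
      · exact absurd hw0 (hflow1 w (by omega))
    have hku : (semiAt G S u).card ≠ 1 := fun h => (hflow1 u h) hu0
    have hkv : (semiAt G S v).card ≠ 1 := fun h => (hflow1 v h) hv0
    omega
  · -- F u = 0, F v ≠ 0
    left
    refine ⟨hu0, hv0, ?_⟩
    rw [hu0] at htot
    simp only [zero_add] at htot
    exact (klein_eq_of_add_eq_zero htot).symm
  · -- F v = 0, F u ≠ 0
    right
    refine ⟨hv0, hu0, ?_⟩
    rw [hv0, add_zero] at htot
    exact klein_eq_of_add_eq_zero htot
  · -- scenario B : both nonzero, impossible since G is a snark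
    exfalso
    apply hncol
    have hFw : G.connFlow S φ w
        = G.connFlow S φ u + G.connFlow S φ v := klein_mid htot
    have hku : (semiAt G S u).card = 1 ∨ (semiAt G S u).card = 2 := by
      have := card_pos_of_flow_ne G S φ hu0; omega
    have hkv : (semiAt G S v).card = 1 ∨ (semiAt G S v).card = 2 := by
      have := card_pos_of_flow_ne G S φ hv0; omega
    have hkw : (semiAt G S w).card = 0 ∨ (semiAt G S w).card = 1 := by omega
    rcases hku with hku | hku <;> rcases hkv with hkv | hkv <;>
      rcases hkw with hkw | hkw
    · -- (1,1,0): parity contradiction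
      omega
    · -- (1,1,1) : B2
      obtain ⟨s, hsu, hFu⟩ := flow_of_card_one G S φ hku
      obtain ⟨t, htv, hFv⟩ := flow_of_card_one G S φ hkv
      obtain ⟨r, hrw, hFwr⟩ := flow_of_card_one G S φ hkw
      have hsm := (mem_semiAt G S).1 (hsu ▸ (by simp : s ∈ ({s} : Finset (G.E × Bool))))
      have htm := (mem_semiAt G S).1 (htv ▸ (by simp : t ∈ ({t} : Finset (G.E × Bool))))
      have hrm := (mem_semiAt G S).1 (hrw ▸ (by simp : r ∈ ({r} : Finset (G.E × Bool))))
      -- second inside end at u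
      obtain ⟨pu, hpuA, hpu1⟩ := exists_extra
        (show ({((e1 : G.E), b1)} : Finset (G.E × Bool)).card < (inAt G S u).card by
          rw [Finset.card_singleton]; omega)
      have hpuE := (mem_inAt G S).1 hpuA
      have hpue1 : pu.1 ≠ e1 := by
        intro h
        apply hpu1
        rw [Finset.mem_singleton]
        have hend : G.endAt e1 pu.2 = some u := by rw [← h]; exact hpuE.1
        have : pu.2 = b1 := side_eq G huw.symm hb1u hb1w hend
        rw [← h, ← this]
      have hpue2 : pu.1 ≠ e2 := by
        intro h
        have hend : G.endAt e2 pu.2 = some u := by rw [← h]; exact hpuE.1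
        rcases end_of_joins G he2 hend with h' | h'
        · exact huw h'
        · exact huv h'
      -- second inside end at v
      obtain ⟨pv, hpvA, hpv1⟩ := exists_extra
        (show ({((e2 : G.E), !b2)} : Finset (G.E × Bool)).card < (inAt G S v).card by
          rw [Finset.card_singleton]; omega)
      have hpvE := (mem_inAt G S).1 hpvA
      have hpve2 : pv.1 ≠ e2 := by
        intro h
        apply hpv1
        rw [Finset.mem_singleton]
        have hend : G.endAt e2 pv.2 = some v := by rw [← h]; exact hpvE.1
        have hb2v' : G.endAt e2 (!!b2) = some w := by rw [Bool.not_not]; exact hb2w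
        have : pv.2 = !b2 := side_eq G hwv hb2v hb2v' hend
        rw [← h, ← this]
      have hpve1 : pv.1 ≠ e1 := by
        intro h
        have hend : G.endAt e1 pv.2 = some v := by rw [← h]; exact hpvE.1
        rcases end_of_joins G he1 hend with h' | h'
        · exact huv h'.symm
        · exact hwv h'.symm
      -- the two extra inside ends belong to the same edge
      have hm : (univ.filter fun e : G.E => ¬ inN G S e).card = 3 := by omega
      have hpveq : pv.1 = pu.1 := by
        by_contra hne
        have hsub : ({e1, e2, pu.1, pv.1} : Finset G.E)
            ⊆ univ.filter fun e : G.E => ¬ inN G S e := by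
          intro z hz
          simp only [Finset.mem_insert, Finset.mem_singleton] at hz
          rcases hz with rfl | rfl | rfl | rfl
          · exact Finset.mem_filter.2 ⟨Finset.mem_univ _, hNe1⟩
          · exact Finset.mem_filter.2 ⟨Finset.mem_univ _, hNe2⟩
          · exact Finset.mem_filter.2 ⟨Finset.mem_univ _, hpuE.2⟩
          · exact Finset.mem_filter.2 ⟨Finset.mem_univ _, hpvE.2⟩
        have hc4 : ({e1, e2, pu.1, pv.1} : Finset G.E).card = 4 := by
          rw [Finset.card_insert_of_notMem (by
              simp only [Finset.mem_insert, Finset.mem_singleton]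
              push_neg
              exact ⟨he12, fun h => hpue1 h.symm, fun h => hpve1 h.symm⟩),
            Finset.card_insert_of_notMem (by
              simp only [Finset.mem_insert, Finset.mem_singleton]
              push_neg
              exact ⟨fun h => hpue2 h.symm, fun h => hpve2 h.symm⟩),
            Finset.card_insert_of_notMem (by
              simp only [Finset.mem_singleton]
              exact fun h => hne h.symm),
            Finset.card_singleton]
        have := Finset.card_le_card hsub
        rw [hc4, hm] at this
        omega
      -- the colouring
      set ψ : G.E → Klein := fun e => if h : inN G S e then φ ⟨e, h⟩
        else if e = e1 then G.connFlow S φ v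
        else if e = e2 then G.connFlow S φ u else G.connFlow S φ w with hψ
      have hψN : ∀ (e : G.E), inN G S e → ψ e = Phi G S φ e := by
        intro e h
        simp only [hψ]
        rw [dif_pos h, Phi_of_inN G S φ h]
      have hψe1 : ψ e1 = G.connFlow S φ v := by
        simp only [hψ]; rw [dif_neg hNe1]; simp
      have hψe2 : ψ e2 = G.connFlow S φ u := by
        simp only [hψ]; rw [dif_neg hNe2, if_neg (fun h => he12 h.symm)]; simp
      have hψe3 : ψ pu.1 = G.connFlow S φ w := by
        simp only [hψ]; rw [dif_neg hpuE.2, if_neg hpue1, if_neg hpue2]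
      -- Klein facts
      have hFw0 : G.connFlow S φ w ≠ 0 := by
        rw [hFwr]; exact Phi_ne_zero G S φ hφ hrm.2
      obtain ⟨huvw1, huvw2, huvw3⟩ := klein_pairwise_of_sum3 hu0 hFw0 hv0 htot
      refine proper_extension G S φ hcub hφ ψ hψN ?_ ?_
      · intro e
        simp only [hψ]
        by_cases h : inN G S e
        · rw [dif_pos h]; exact hφ.1 _
        · rw [dif_neg h]
          by_cases h1 : e = e1
          · rw [if_pos h1]; exact hv0
          · rw [if_neg h1]
            by_cases h2 : e = e2
            · rw [if_pos h2]; exact hu0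
            · rw [if_neg h2]; exact hFw0
      · intro x hx p q hp hq hpq
        have hx3 : x = u ∨ x = w ∨ x = v := by
          rw [hS] at hx; simpa using hx
        rcases hx3 with hxe | hxe | hxe <;> rw [hxe] at hp hq
        · -- at u : ends (e1,b1), pu, s with values Fv, Fw, Fu
          have hne1 : (e1, b1) ≠ pu := pair_ne (Ne.symm hpue1)
          have hne2 : (e1, b1) ≠ s := pair_ne_of_inN G S hNe1 hsm.2
          have hne3 : pu ≠ s := pair_ne (fun h => hpuE.2 (by rw [h]; exact hsm.2))
          have hEu : endsAt G u = {(e1, b1), pu, s} :=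
            endsAt_eq_three G hcub hb1u hpuE.1 hsm.1 hne1 hne2 hne3
          refine distinct_on_three (f := fun z : G.E × Bool => ψ z.1) hpq
            (mem_three hEu ((mem_endsAt G).2 hp)) (mem_three hEu ((mem_endsAt G).2 hq))
            ?_ ?_ ?_
          · show ψ e1 ≠ ψ pu.1
            rw [hψe1, hψe3]; exact huvw3.symm
          · show ψ e1 ≠ ψ s.1
            rw [hψe1, hψN s.1 hsm.2, ← hFu]; exact huvw2.symm
          · show ψ pu.1 ≠ ψ s.1
            rw [hψe3, hψN s.1 hsm.2, ← hFu]; exact huvw1.symm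
        · -- at w : ends (e1,!b1), (e2,b2), r with values Fv, Fu, Fw
          have hne1 : (e1, !b1) ≠ (e2, b2) := pair_ne (show e1 ≠ e2 from he12)
          have hne2 : (e1, !b1) ≠ r := pair_ne_of_inN G S hNe1 hrm.2
          have hne3 : (e2, b2) ≠ r := pair_ne_of_inN G S hNe2 hrm.2
          have hEw : endsAt G w = {(e1, !b1), (e2, b2), r} :=
            endsAt_eq_three G hcub hb1w hb2w hrm.1 hne1 hne2 hne3
          refine distinct_on_three (f := fun z : G.E × Bool => ψ z.1) hpq
            (mem_three hEw ((mem_endsAt G).2 hp)) (mem_three hEw ((mem_endsAt G).2 hq))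
            ?_ ?_ ?_
          · show ψ e1 ≠ ψ e2
            rw [hψe1, hψe2]; exact huvw2.symm
          · show ψ e1 ≠ ψ r.1
            rw [hψe1, hψN r.1 hrm.2, ← hFwr]; exact huvw3.symm
          · show ψ e2 ≠ ψ r.1
            rw [hψe2, hψN r.1 hrm.2, ← hFwr]; exact huvw1
        · -- at v : ends (e2,!b2), pv, t with values Fu, Fw, Fv
          have hne1 : (e2, !b2) ≠ pv := pair_ne (Ne.symm hpve2)
          have hne2 : (e2, !b2) ≠ t := pair_ne_of_inN G S hNe2 htm.2
          have hne3 : pv ≠ t := pair_ne (fun h => hpvE.2 (by rw [h]; exact htm.2))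
          have hEv : endsAt G v = {(e2, !b2), pv, t} :=
            endsAt_eq_three G hcub hb2v hpvE.1 htm.1 hne1 hne2 hne3
          have hψpv : ψ pv.1 = G.connFlow S φ w := by rw [hpveq]; exact hψe3
          refine distinct_on_three (f := fun z : G.E × Bool => ψ z.1) hpq
            (mem_three hEv ((mem_endsAt G).2 hp)) (mem_three hEv ((mem_endsAt G).2 hq))
            ?_ ?_ ?_
          · show ψ e2 ≠ ψ pv.1
            rw [hψe2, hψpv]; exact huvw1
          · show ψ e2 ≠ ψ t.1
            rw [hψe2, hψN t.1 htm.2, ← hFv]; exact huvw2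
          · show ψ pv.1 ≠ ψ t.1
            rw [hψpv, hψN t.1 htm.2, ← hFv]; exact huvw3
    · -- (1,2,0) : B3
      obtain ⟨s, hsu, hFu⟩ := flow_of_card_one G S φ hku
      obtain ⟨t1, t2, ht12, htv, hFv⟩ := flow_of_card_two G S φ hkv
      have hsm := (mem_semiAt G S).1 (hsu ▸ (by simp : s ∈ ({s} : Finset (G.E × Bool))))
      have ht1m := (mem_semiAt G S).1 (htv ▸ (by simp : t1 ∈ ({t1, t2} : Finset (G.E × Bool))))
      have ht2m := (mem_semiAt G S).1 (htv ▸ (by simp : t2 ∈ ({t1, t2} : Finset (G.E × Bool))))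
      have hFw : G.connFlow S φ w = 0 := flow_of_card_zero G S φ hkw
      have hFuv : G.connFlow S φ u = G.connFlow S φ v := by
        rw [hFw, add_zero] at htot
        exact klein_eq_of_add_eq_zero htot
      -- second inside end at u
      obtain ⟨pu, hpuA, hpu1⟩ := exists_extra
        (show ({((e1 : G.E), b1)} : Finset (G.E × Bool)).card < (inAt G S u).card by
          rw [Finset.card_singleton]; omega)
      have hpuE := (mem_inAt G S).1 hpuA
      have hpue1 : pu.1 ≠ e1 := by
        intro h
        apply hpu1
        rw [Finset.mem_singleton]
        have hend : G.endAt e1 pu.2 = some u := by rw [← h]; exact hpuE.1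
        have : pu.2 = b1 := side_eq G huw.symm hb1u hb1w hend
        rw [← h, ← this]
      have hpue2 : pu.1 ≠ e2 := by
        intro h
        have hend : G.endAt e2 pu.2 = some u := by rw [← h]; exact hpuE.1
        rcases end_of_joins G he2 hend with h' | h'
        · exact huw h'
        · exact huv h'
      -- third inside end at w
      obtain ⟨pw, hpwA, hpw1⟩ := exists_extra
        (show ({((e1 : G.E), !b1), ((e2 : G.E), b2)} : Finset (G.E × Bool)).card
            < (inAt G S w).card by
          rw [Finset.card_insert_of_notMem (by simp [he12]), Finset.card_singleton]; omega)
      have hpwE := (mem_inAt G S).1 hpwA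
      have hpwe1 : pw.1 ≠ e1 := by
        intro h
        apply hpw1
        have hend : G.endAt e1 pw.2 = some w := by rw [← h]; exact hpwE.1
        have hb1u' : G.endAt e1 (!!b1) = some u := by rw [Bool.not_not]; exact hb1u
        have : pw.2 = !b1 := side_eq G huw hb1w hb1u' hend
        simp only [Finset.mem_insert, Finset.mem_singleton]
        left
        rw [← h, ← this]
      have hpwe2 : pw.1 ≠ e2 := by
        intro h
        apply hpw1
        have hend : G.endAt e2 pw.2 = some w := by rw [← h]; exact hpwE.1
        have : pw.2 = b2 := side_eq G hwv.symm hb2w hb2v hend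
        simp only [Finset.mem_insert, Finset.mem_singleton]
        right
        rw [← h, ← this]
      have hm : (univ.filter fun e : G.E => ¬ inN G S e).card = 3 := by omega
      have hpweq : pw.1 = pu.1 := by
        by_contra hne
        have hsub : ({e1, e2, pu.1, pw.1} : Finset G.E)
            ⊆ univ.filter fun e : G.E => ¬ inN G S e := by
          intro z hz
          simp only [Finset.mem_insert, Finset.mem_singleton] at hz
          rcases hz with rfl | rfl | rfl | rfl
          · exact Finset.mem_filter.2 ⟨Finset.mem_univ _, hNe1⟩
          · exact Finset.mem_filter.2 ⟨Finset.mem_univ _, hNe2⟩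
          · exact Finset.mem_filter.2 ⟨Finset.mem_univ _, hpuE.2⟩
          · exact Finset.mem_filter.2 ⟨Finset.mem_univ _, hpwE.2⟩
        have hc4 : ({e1, e2, pu.1, pw.1} : Finset G.E).card = 4 := by
          rw [Finset.card_insert_of_notMem (by
              simp only [Finset.mem_insert, Finset.mem_singleton]
              push_neg
              exact ⟨he12, fun h => hpue1 h.symm, fun h => hpwe1 h.symm⟩),
            Finset.card_insert_of_notMem (by
              simp only [Finset.mem_insert, Finset.mem_singleton]
              push_neg
              exact ⟨fun h => hpue2 h.symm, fun h => hpwe2 h.symm⟩),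
            Finset.card_insert_of_notMem (by
              simp only [Finset.mem_singleton]
              exact fun h => hne h.symm),
            Finset.card_singleton]
        have := Finset.card_le_card hsub
        rw [hc4, hm] at this
        omega
      obtain ⟨hf1, hf2, hf3, hf4, hf5⟩ := f_spec hu0
      set ψ : G.E → Klein := fun e => if h : inN G S e then φ ⟨e, h⟩
        else if e = e1 then f1 (G.connFlow S φ u)
        else if e = e2 then G.connFlow S φ v else f2 (G.connFlow S φ u) with hψ
      have hψN : ∀ (e : G.E), inN G S e → ψ e = Phi G S φ e := by
        intro e h
        simp only [hψ]
        rw [dif_pos h, Phi_of_inN G S φ h]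
      have hψe1 : ψ e1 = f1 (G.connFlow S φ u) := by
        simp only [hψ]; rw [dif_neg hNe1]; simp
      have hψe2 : ψ e2 = G.connFlow S φ v := by
        simp only [hψ]; rw [dif_neg hNe2, if_neg (fun h => he12 h.symm)]; simp
      have hψe3 : ψ pu.1 = f2 (G.connFlow S φ u) := by
        simp only [hψ]; rw [dif_neg hpuE.2, if_neg hpue1, if_neg hpue2]
      have hb1' : Phi G S φ t1.1 ≠ 0 := Phi_ne_zero G S φ hφ ht1m.2
      have hb2' : Phi G S φ t2.1 ≠ 0 := Phi_ne_zero G S φ hφ ht2m.2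
      have hvpair := klein_pair_ne hb1' hb2' (hFv ▸ hv0)
      refine proper_extension G S φ hcub hφ ψ hψN ?_ ?_
      · intro e
        simp only [hψ]
        by_cases h : inN G S e
        · rw [dif_pos h]; exact hφ.1 _
        · rw [dif_neg h]
          by_cases h1 : e = e1
          · rw [if_pos h1]; exact hf1
          · rw [if_neg h1]
            by_cases h2 : e = e2
            · rw [if_pos h2]; exact hv0
            · rw [if_neg h2]; exact hf2
      · intro x hx p q hp hq hpq
        have hx3 : x = u ∨ x = w ∨ x = v := by
          rw [hS] at hx; simpa using hx
        rcases hx3 with hxe | hxe | hxe <;> rw [hxe] at hp hq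
        · -- at u : ends (e1,b1), pu, s with values f1 Fu, f2 Fu, Fu
          have hne1 : (e1, b1) ≠ pu := pair_ne (Ne.symm hpue1)
          have hne2 : (e1, b1) ≠ s := pair_ne_of_inN G S hNe1 hsm.2
          have hne3 : pu ≠ s := pair_ne (fun h => hpuE.2 (by rw [h]; exact hsm.2))
          have hEu : endsAt G u = {(e1, b1), pu, s} :=
            endsAt_eq_three G hcub hb1u hpuE.1 hsm.1 hne1 hne2 hne3
          refine distinct_on_three (f := fun z : G.E × Bool => ψ z.1) hpq
            (mem_three hEu ((mem_endsAt G).2 hp)) (mem_three hEu ((mem_endsAt G).2 hq))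
            ?_ ?_ ?_
          · show ψ e1 ≠ ψ pu.1
            rw [hψe1, hψe3]; exact hf5
          · show ψ e1 ≠ ψ s.1
            rw [hψe1, hψN s.1 hsm.2, ← hFu]; exact hf3
          · show ψ pu.1 ≠ ψ s.1
            rw [hψe3, hψN s.1 hsm.2, ← hFu]; exact hf4
        · -- at w : ends (e1,!b1), (e2,b2), pw with values f1 Fu, Fv = Fu, f2 Fu
          have hne1 : (e1, !b1) ≠ (e2, b2) := pair_ne (show e1 ≠ e2 from he12)
          have hne2 : (e1, !b1) ≠ pw := pair_ne (Ne.symm hpwe1)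
          have hne3 : (e2, b2) ≠ pw := pair_ne (Ne.symm hpwe2)
          have hEw : endsAt G w = {(e1, !b1), (e2, b2), pw} :=
            endsAt_eq_three G hcub hb1w hb2w hpwE.1 hne1 hne2 hne3
          have hψpw : ψ pw.1 = f2 (G.connFlow S φ u) := by rw [hpweq]; exact hψe3
          refine distinct_on_three (f := fun z : G.E × Bool => ψ z.1) hpq
            (mem_three hEw ((mem_endsAt G).2 hp)) (mem_three hEw ((mem_endsAt G).2 hq))
            ?_ ?_ ?_
          · show ψ e1 ≠ ψ e2
            rw [hψe1, hψe2, ← hFuv]; exact hf3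
          · show ψ e1 ≠ ψ pw.1
            rw [hψe1, hψpw]; exact hf5
          · show ψ e2 ≠ ψ pw.1
            rw [hψe2, hψpw, ← hFuv]; exact hf4.symm
        · -- at v : ends (e2,!b2), t1, t2 with values Fv, Phi t1, Phi t2
          have hne1 : (e2, !b2) ≠ t1 := pair_ne_of_inN G S hNe2 ht1m.2
          have hne2 : (e2, !b2) ≠ t2 := pair_ne_of_inN G S hNe2 ht2m.2
          have hEv : endsAt G v = {(e2, !b2), t1, t2} :=
            endsAt_eq_three G hcub hb2v ht1m.1 ht2m.1 hne1 hne2 ht12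
          refine distinct_on_three (f := fun z : G.E × Bool => ψ z.1) hpq
            (mem_three hEv ((mem_endsAt G).2 hp)) (mem_three hEv ((mem_endsAt G).2 hq))
            ?_ ?_ ?_
          · show ψ e2 ≠ ψ t1.1
            rw [hψe2, hψN t1.1 ht1m.2, hFv]; exact hvpair.1
          · show ψ e2 ≠ ψ t2.1
            rw [hψe2, hψN t2.1 ht2m.2, hFv]; exact hvpair.2.1
          · show ψ t1.1 ≠ ψ t2.1
            rw [hψN t1.1 ht1m.2, hψN t2.1 ht2m.2]; exact hvpair.2.2
    · -- (1,2,1): parity contradiction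
      omega
    · -- (2,1,0) : B4
      obtain ⟨s1, s2, hs12, hsu, hFu⟩ := flow_of_card_two G S φ hku
      obtain ⟨t, htv, hFv⟩ := flow_of_card_one G S φ hkv
      have hs1m := (mem_semiAt G S).1 (hsu ▸ (by simp : s1 ∈ ({s1, s2} : Finset (G.E × Bool))))
      have hs2m := (mem_semiAt G S).1 (hsu ▸ (by simp : s2 ∈ ({s1, s2} : Finset (G.E × Bool))))
      have htm := (mem_semiAt G S).1 (htv ▸ (by simp : t ∈ ({t} : Finset (G.E × Bool))))
      have hFw0 : G.connFlow S φ w = 0 := flow_of_card_zero G S φ hkw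
      have hFuv : G.connFlow S φ u = G.connFlow S φ v := by
        rw [hFw0, add_zero] at htot
        exact klein_eq_of_add_eq_zero htot
      -- second inside end at v
      obtain ⟨pv, hpvA, hpv1⟩ := exists_extra
        (show ({((e2 : G.E), !b2)} : Finset (G.E × Bool)).card < (inAt G S v).card by
          rw [Finset.card_singleton]; omega)
      have hpvE := (mem_inAt G S).1 hpvA
      have hpve2 : pv.1 ≠ e2 := by
        intro h
        apply hpv1
        rw [Finset.mem_singleton]
        have hend : G.endAt e2 pv.2 = some v := by rw [← h]; exact hpvE.1
        have hb2v' : G.endAt e2 (!!b2) = some w := by rw [Bool.not_not]; exact hb2w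
        have : pv.2 = !b2 := side_eq G hwv hb2v hb2v' hend
        rw [← h, ← this]
      have hpve1 : pv.1 ≠ e1 := by
        intro h
        have hend : G.endAt e1 pv.2 = some v := by rw [← h]; exact hpvE.1
        rcases end_of_joins G he1 hend with h' | h'
        · exact huv h'.symm
        · exact hwv h'.symm
      -- third inside end at w
      obtain ⟨pw, hpwA, hpw1⟩ := exists_extra
        (show ({((e1 : G.E), !b1), ((e2 : G.E), b2)} : Finset (G.E × Bool)).card
            < (inAt G S w).card by
          rw [Finset.card_insert_of_notMem (by simp [he12]), Finset.card_singleton]; omega)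
      have hpwE := (mem_inAt G S).1 hpwA
      have hpwe1 : pw.1 ≠ e1 := by
        intro h
        apply hpw1
        have hend : G.endAt e1 pw.2 = some w := by rw [← h]; exact hpwE.1
        have hb1u' : G.endAt e1 (!!b1) = some u := by rw [Bool.not_not]; exact hb1u
        have : pw.2 = !b1 := side_eq G huw hb1w hb1u' hend
        simp only [Finset.mem_insert, Finset.mem_singleton]
        left
        rw [← h, ← this]
      have hpwe2 : pw.1 ≠ e2 := by
        intro h
        apply hpw1
        have hend : G.endAt e2 pw.2 = some w := by rw [← h]; exact hpwE.1
        have : pw.2 = b2 := side_eq G hwv.symm hb2w hb2v hend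
        simp only [Finset.mem_insert, Finset.mem_singleton]
        right
        rw [← h, ← this]
      have hm : (univ.filter fun e : G.E => ¬ inN G S e).card = 3 := by omega
      have hpweq : pw.1 = pv.1 := by
        by_contra hne
        have hsub : ({e1, e2, pv.1, pw.1} : Finset G.E)
            ⊆ univ.filter fun e : G.E => ¬ inN G S e := by
          intro z hz
          simp only [Finset.mem_insert, Finset.mem_singleton] at hz
          rcases hz with rfl | rfl | rfl | rfl
          · exact Finset.mem_filter.2 ⟨Finset.mem_univ _, hNe1⟩
          · exact Finset.mem_filter.2 ⟨Finset.mem_univ _, hNe2⟩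
          · exact Finset.mem_filter.2 ⟨Finset.mem_univ _, hpvE.2⟩
          · exact Finset.mem_filter.2 ⟨Finset.mem_univ _, hpwE.2⟩
        have hc4 : ({e1, e2, pv.1, pw.1} : Finset G.E).card = 4 := by
          rw [Finset.card_insert_of_notMem (by
              simp only [Finset.mem_insert, Finset.mem_singleton]
              push_neg
              exact ⟨he12, fun h => hpve1 h.symm, fun h => hpwe1 h.symm⟩),
            Finset.card_insert_of_notMem (by
              simp only [Finset.mem_insert, Finset.mem_singleton]
              push_neg
              exact ⟨fun h => hpve2 h.symm, fun h => hpwe2 h.symm⟩),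
            Finset.card_insert_of_notMem (by
              simp only [Finset.mem_singleton]
              exact fun h => hne h.symm),
            Finset.card_singleton]
        have := Finset.card_le_card hsub
        rw [hc4, hm] at this
        omega
      obtain ⟨hf1, hf2, hf3, hf4, hf5⟩ := f_spec hv0
      set ψ : G.E → Klein := fun e => if h : inN G S e then φ ⟨e, h⟩
        else if e = e1 then G.connFlow S φ u
        else if e = e2 then f1 (G.connFlow S φ v) else f2 (G.connFlow S φ v) with hψ
      have hψN : ∀ (e : G.E), inN G S e → ψ e = Phi G S φ e := by
        intro e h
        simp only [hψ]
        rw [dif_pos h, Phi_of_inN G S φ h]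
      have hψe1 : ψ e1 = G.connFlow S φ u := by
        simp only [hψ]; rw [dif_neg hNe1]; simp
      have hψe2 : ψ e2 = f1 (G.connFlow S φ v) := by
        simp only [hψ]; rw [dif_neg hNe2, if_neg (fun h => he12 h.symm)]; simp
      have hψe3 : ψ pv.1 = f2 (G.connFlow S φ v) := by
        simp only [hψ]; rw [dif_neg hpvE.2, if_neg hpve1, if_neg hpve2]
      have ha1 : Phi G S φ s1.1 ≠ 0 := Phi_ne_zero G S φ hφ hs1m.2
      have ha2 : Phi G S φ s2.1 ≠ 0 := Phi_ne_zero G S φ hφ hs2m.2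
      have hupair := klein_pair_ne ha1 ha2 (hFu ▸ hu0)
      refine proper_extension G S φ hcub hφ ψ hψN ?_ ?_
      · intro e
        simp only [hψ]
        by_cases h : inN G S e
        · rw [dif_pos h]; exact hφ.1 _
        · rw [dif_neg h]
          by_cases h1 : e = e1
          · rw [if_pos h1]; exact hu0
          · rw [if_neg h1]
            by_cases h2 : e = e2
            · rw [if_pos h2]; exact hf1
            · rw [if_neg h2]; exact hf2
      · intro x hx p q hp hq hpq
        have hx3 : x = u ∨ x = w ∨ x = v := by
          rw [hS] at hx; simpa using hx
        rcases hx3 with hxe | hxe | hxe <;> rw [hxe] at hp hq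
        · -- at u : ends (e1,b1), s1, s2 with values Fu, Phi s1, Phi s2
          have hne1 : (e1, b1) ≠ s1 := pair_ne_of_inN G S hNe1 hs1m.2
          have hne2 : (e1, b1) ≠ s2 := pair_ne_of_inN G S hNe1 hs2m.2
          have hEu : endsAt G u = {(e1, b1), s1, s2} :=
            endsAt_eq_three G hcub hb1u hs1m.1 hs2m.1 hne1 hne2 hs12
          refine distinct_on_three (f := fun z : G.E × Bool => ψ z.1) hpq
            (mem_three hEu ((mem_endsAt G).2 hp)) (mem_three hEu ((mem_endsAt G).2 hq))
            ?_ ?_ ?_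
          · show ψ e1 ≠ ψ s1.1
            rw [hψe1, hψN s1.1 hs1m.2, hFu]; exact hupair.1
          · show ψ e1 ≠ ψ s2.1
            rw [hψe1, hψN s2.1 hs2m.2, hFu]; exact hupair.2.1
          · show ψ s1.1 ≠ ψ s2.1
            rw [hψN s1.1 hs1m.2, hψN s2.1 hs2m.2]; exact hupair.2.2
        · -- at w : ends (e1,!b1), (e2,b2), pw with values Fu = Fv, f1 Fv, f2 Fv
          have hne1 : (e1, !b1) ≠ (e2, b2) := pair_ne (show e1 ≠ e2 from he12)
          have hne2 : (e1, !b1) ≠ pw := pair_ne (Ne.symm hpwe1)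
          have hne3 : (e2, b2) ≠ pw := pair_ne (Ne.symm hpwe2)
          have hEw : endsAt G w = {(e1, !b1), (e2, b2), pw} :=
            endsAt_eq_three G hcub hb1w hb2w hpwE.1 hne1 hne2 hne3
          have hψpw : ψ pw.1 = f2 (G.connFlow S φ v) := by rw [hpweq]; exact hψe3
          refine distinct_on_three (f := fun z : G.E × Bool => ψ z.1) hpq
            (mem_three hEw ((mem_endsAt G).2 hp)) (mem_three hEw ((mem_endsAt G).2 hq))
            ?_ ?_ ?_
          · show ψ e1 ≠ ψ e2
            rw [hψe1, hψe2, hFuv]; exact hf3.symm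
          · show ψ e1 ≠ ψ pw.1
            rw [hψe1, hψpw, hFuv]; exact hf4.symm
          · show ψ e2 ≠ ψ pw.1
            rw [hψe2, hψpw]; exact hf5
        · -- at v : ends (e2,!b2), pv, t with values f1 Fv, f2 Fv, Fv
          have hne1 : (e2, !b2) ≠ pv := pair_ne (Ne.symm hpve2)
          have hne2 : (e2, !b2) ≠ t := pair_ne_of_inN G S hNe2 htm.2
          have hne3 : pv ≠ t := pair_ne (fun h => hpvE.2 (by rw [h]; exact htm.2))
          have hEv : endsAt G v = {(e2, !b2), pv, t} :=
            endsAt_eq_three G hcub hb2v hpvE.1 htm.1 hne1 hne2 hne3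
          refine distinct_on_three (f := fun z : G.E × Bool => ψ z.1) hpq
            (mem_three hEv ((mem_endsAt G).2 hp)) (mem_three hEv ((mem_endsAt G).2 hq))
            ?_ ?_ ?_
          · show ψ e2 ≠ ψ pv.1
            rw [hψe2, hψe3]; exact hf5
          · show ψ e2 ≠ ψ t.1
            rw [hψe2, hψN t.1 htm.2, ← hFv]; exact hf3
          · show ψ pv.1 ≠ ψ t.1
            rw [hψe3, hψN t.1 htm.2, ← hFv]; exact hf4
    · -- (2,1,1): parity contradiction
      omega
    · -- (2,2,0): parity contradiction
      omega
    · -- (2,2,1) : B1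
      obtain ⟨s1, s2, hs12, hsu, hFu⟩ := flow_of_card_two G S φ hku
      obtain ⟨t1, t2, ht12, htv, hFv⟩ := flow_of_card_two G S φ hkv
      obtain ⟨r, hrw, hFwr⟩ := flow_of_card_one G S φ hkw
      have hs1m := (mem_semiAt G S).1 (hsu ▸ (by simp : s1 ∈ ({s1, s2} : Finset (G.E × Bool))))
      have hs2m := (mem_semiAt G S).1 (hsu ▸ (by simp : s2 ∈ ({s1, s2} : Finset (G.E × Bool))))
      have ht1m := (mem_semiAt G S).1 (htv ▸ (by simp : t1 ∈ ({t1, t2} : Finset (G.E × Bool))))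
      have ht2m := (mem_semiAt G S).1 (htv ▸ (by simp : t2 ∈ ({t1, t2} : Finset (G.E × Bool))))
      have hrm := (mem_semiAt G S).1 (hrw ▸ (by simp : r ∈ ({r} : Finset (G.E × Bool))))
      set ψ : G.E → Klein := fun e => if h : inN G S e then φ ⟨e, h⟩
        else if e = e1 then G.connFlow S φ u else G.connFlow S φ v with hψ
      have hψN : ∀ (e : G.E), inN G S e → ψ e = Phi G S φ e := by
        intro e h
        simp only [hψ]
        rw [dif_pos h, Phi_of_inN G S φ h]
      have hψe1 : ψ e1 = G.connFlow S φ u := by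
        simp only [hψ]; rw [dif_neg hNe1]; simp
      have hψe2 : ψ e2 = G.connFlow S φ v := by
        simp only [hψ]; rw [dif_neg hNe2, if_neg (fun h => he12 h.symm)]
      -- Klein facts
      have ha1 : Phi G S φ s1.1 ≠ 0 := Phi_ne_zero G S φ hφ hs1m.2
      have ha2 : Phi G S φ s2.1 ≠ 0 := Phi_ne_zero G S φ hφ hs2m.2
      have hb1' : Phi G S φ t1.1 ≠ 0 := Phi_ne_zero G S φ hφ ht1m.2
      have hb2' : Phi G S φ t2.1 ≠ 0 := Phi_ne_zero G S φ hφ ht2m.2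
      have hupair := klein_pair_ne ha1 ha2 (hFu ▸ hu0)
      have hvpair := klein_pair_ne hb1' hb2' (hFv ▸ hv0)
      have hFw0 : G.connFlow S φ w ≠ 0 := by
        rw [hFwr]; exact Phi_ne_zero G S φ hφ hrm.2
      have hFuv : G.connFlow S φ u ≠ G.connFlow S φ v :=
        klein_ne_of_add_ne_zero (hFw ▸ hFw0)
      have hFuw : G.connFlow S φ u ≠ G.connFlow S φ w := by
        rw [hFw]; exact (klein_add_ne_left hv0).symm
      have hFvw : G.connFlow S φ v ≠ G.connFlow S φ w := by
        rw [hFw, add_comm]; exact (klein_add_ne_left hu0).symm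
      refine proper_extension G S φ hcub hφ ψ hψN ?_ ?_
      · -- nonzero
        intro e
        simp only [hψ]
        by_cases h : inN G S e
        · rw [dif_pos h]; exact hφ.1 _
        · rw [dif_neg h]
          by_cases h1 : e = e1
          · rw [if_pos h1]; exact hu0
          · rw [if_neg h1]; exact hv0
      · -- proper at S
        intro x hx p q hp hq hpq
        have hx3 : x = u ∨ x = w ∨ x = v := by
          rw [hS] at hx; simpa using hx
        rcases hx3 with hxe | hxe | hxe <;> rw [hxe] at hp hq
        · -- at u
          have hne1 : (e1, b1) ≠ s1 := pair_ne_of_inN G S hNe1 hs1m.2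
          have hne2 : (e1, b1) ≠ s2 := pair_ne_of_inN G S hNe1 hs2m.2
          have hEu : endsAt G u = {(e1, b1), s1, s2} :=
            endsAt_eq_three G hcub hb1u hs1m.1 hs2m.1 hne1 hne2 hs12
          refine distinct_on_three (f := fun z : G.E × Bool => ψ z.1) hpq (mem_three hEu ((mem_endsAt G).2 hp))
            (mem_three hEu ((mem_endsAt G).2 hq)) ?_ ?_ ?_
          · show ψ e1 ≠ ψ s1.1
            rw [hψe1, hψN s1.1 hs1m.2, hFu]; exact hupair.1
          · show ψ e1 ≠ ψ s2.1
            rw [hψe1, hψN s2.1 hs2m.2, hFu]; exact hupair.2.1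
          · show ψ s1.1 ≠ ψ s2.1
            rw [hψN s1.1 hs1m.2, hψN s2.1 hs2m.2]; exact hupair.2.2
        · -- at w
          have hne1 : (e1, !b1) ≠ (e2, b2) := pair_ne (show e1 ≠ e2 from he12)
          have hne2 : (e1, !b1) ≠ r := pair_ne_of_inN G S hNe1 hrm.2
          have hne3 : (e2, b2) ≠ r := pair_ne_of_inN G S hNe2 hrm.2
          have hEw : endsAt G w = {(e1, !b1), (e2, b2), r} :=
            endsAt_eq_three G hcub hb1w hb2w hrm.1 hne1 hne2 hne3
          refine distinct_on_three (f := fun z : G.E × Bool => ψ z.1) hpq (mem_three hEw ((mem_endsAt G).2 hp))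
            (mem_three hEw ((mem_endsAt G).2 hq)) ?_ ?_ ?_
          · show ψ e1 ≠ ψ e2
            rw [hψe1, hψe2]; exact hFuv
          · show ψ e1 ≠ ψ r.1
            rw [hψe1, hψN r.1 hrm.2, ← hFwr]; exact hFuw
          · show ψ e2 ≠ ψ r.1
            rw [hψe2, hψN r.1 hrm.2, ← hFwr]; exact hFvw
        · -- at v
          have hne1 : (e2, !b2) ≠ t1 := pair_ne_of_inN G S hNe2 ht1m.2
          have hne2 : (e2, !b2) ≠ t2 := pair_ne_of_inN G S hNe2 ht2m.2
          have hEv : endsAt G v = {(e2, !b2), t1, t2} :=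
            endsAt_eq_three G hcub hb2v ht1m.1 ht2m.1 hne1 hne2 ht12
          refine distinct_on_three (f := fun z : G.E × Bool => ψ z.1) hpq (mem_three hEv ((mem_endsAt G).2 hp))
            (mem_three hEv ((mem_endsAt G).2 hq)) ?_ ?_ ?_
          · show ψ e2 ≠ ψ t1.1
            rw [hψe2, hψN t1.1 ht1m.2, hFv]; exact hvpair.1
          · show ψ e2 ≠ ψ t2.1
            rw [hψe2, hψN t2.1 ht2m.2, hFv]; exact hvpair.2.1
          · show ψ t1.1 ≠ ψ t2.1
            rw [hψN t1.1 ht1m.2, hψN t2.1 ht2m.2]; exact hvpair.2.2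
end

section
/- Let M be a 3-pole with three distinguished vertices v1, v2, v3 each incident with one dangling edge. Replace each vertex of M by an even (2,2,2)-pole and each edge (including dangling ones) by a pair of isolated edges placed into corresponding connectors, yielding a (2,2,2)-pole H_M(S1,S2,S3) whose connector Si consists of the two semiedges replacing the dangling edge at vi. Then H_M is itself an even (2,2,2)-pole. -/
/-- The colouring set of a 6-pole, as a predicate on the colours of its six
semiedges. -/
abbrev Pred6 : Type := Klein → Klein → Klein → Klein → Klein → Klein → Prop

/-- Exactly zero or two of the three connector flows `f₁, f₂, f₃` are nonzero. -/
def EvenFlows (f1 f2 f3 : Klein) : Prop :=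
  (f1 = 0 ∧ f2 = 0 ∧ f3 = 0) ∨ (f1 = 0 ∧ f2 ≠ 0 ∧ f3 ≠ 0) ∨
  (f2 = 0 ∧ f1 ≠ 0 ∧ f3 ≠ 0) ∨ (f3 = 0 ∧ f1 ≠ 0 ∧ f2 ≠ 0)

/-- `H` is (the colouring set of) an even `(2,2,2)`-pole: in every colouring
all semiedge colours are nonzero, the total semiedge sum vanishes (Kirchhoff's
law), and the number of connectors with nonzero flow is even. -/
def IsEven222 (H : Pred6) : Prop :=
  ∀ a1 b1 a2 b2 a3 b3, H a1 b1 a2 b2 a3 b3 →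
    (a1 ≠ 0 ∧ b1 ≠ 0 ∧ a2 ≠ 0 ∧ b2 ≠ 0 ∧ a3 ≠ 0 ∧ b3 ≠ 0) ∧
    a1 + b1 + a2 + b2 + a3 + b3 = 0 ∧
    EvenFlows (a1 + b1) (a2 + b2) (a3 + b3)

private instance evenFlows.decidable (f1 f2 f3 : Klein) : Decidable (EvenFlows f1 f2 f3) := by
  unfold EvenFlows; infer_instance

private lemma klein_tri : ∀ x y z a : Klein, a ≠ 0 → x + y + z = 0 → EvenFlows x y z →
    (if x = a then (1 : ZMod 2) else 0) + (if y = a then (1 : ZMod 2) else 0) +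
      (if z = a then (1 : ZMod 2) else 0) = 0 := by decide

private lemma klein_fin3 : ∀ f1 f2 f3 : Klein,
    (∀ a : Klein, a ≠ 0 →
      (if f1 = a then (1 : ZMod 2) else 0) + (if f2 = a then (1 : ZMod 2) else 0) +
        (if f3 = a then (1 : ZMod 2) else 0) = 0) →
    f1 + f2 + f3 = 0 ∧ EvenFlows f1 f2 f3 := by decide

/-- A 3-pole `M`, given combinatorially: a cubic multipole whose three
semiedge ends are `d 0, d 1, d 2`, carried by the three distinguished vertices
`v 0, v 1, v 2` (`E3 u` enumerates the three edge ends at each vertex `u`).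
Replace every vertex `u` of `M` by an even `(2,2,2)`-pole `Hs u` and every edge
(including the dangling ones) by a pair of isolated edges placed into the
corresponding connectors, each such pair carrying the pair of colours `ψ e`.
Then the resulting `(2,2,2)`-pole `H_M(S₁,S₂,S₃)`, whose connector `Sᵢ`
consists of the two semiedges replacing the dangling edge at `vᵢ`, is itself an
even `(2,2,2)`-pole. -/
theorem composed_even_222 (M : Multipole) (hM : M.IsCubic)
    (d : Fin 3 → M.E × Bool)
    (hd : ∀ i, M.endAt (d i).1 (d i).2 = none)
    (hdinj : Function.Injective d)
    (hdall : ∀ p : M.E × Bool, M.endAt p.1 p.2 = none → ∃ i, d i = p)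
    (v : Fin 3 → M.V)
    (hv : ∀ i, M.endAt (d i).1 (!(d i).2) = some (v i))
    (hvinj : Function.Injective v)
    (E3 : M.V → Fin 3 → M.E × Bool)
    (hE3 : ∀ u j, M.endAt (E3 u j).1 (E3 u j).2 = some u)
    (hE3inj : ∀ u, Function.Injective (E3 u))
    (Hs : M.V → Pred6) (hHs : ∀ u, IsEven222 (Hs u)) :
    IsEven222 (fun a1 b1 a2 b2 a3 b3 =>
      ∃ ψ : M.E → Klein × Klein,
        (∀ u : M.V,
          Hs u (ψ (E3 u 0).1).1 (ψ (E3 u 0).1).2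
               (ψ (E3 u 1).1).1 (ψ (E3 u 1).1).2
               (ψ (E3 u 2).1).1 (ψ (E3 u 2).1).2) ∧
        ψ (d 0).1 = (a1, b1) ∧ ψ (d 1).1 = (a2, b2) ∧ ψ (d 2).1 = (a3, b3)) := by
  intro a1 b1 a2 b2 a3 b3 hH
  obtain ⟨ψ, hψ, hD0, hD1, hD2⟩ := hH
  set g : M.E → Klein := fun e => (ψ e).1 + (ψ e).2 with hg
  -- per-vertex facts
  have hvert : ∀ u : M.V,
      g (E3 u 0).1 + g (E3 u 1).1 + g (E3 u 2).1 = 0 ∧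
      EvenFlows (g (E3 u 0).1) (g (E3 u 1).1) (g (E3 u 2).1) := by
    intro u
    obtain ⟨-, hsum, hev⟩ := hHs u _ _ _ _ _ _ (hψ u)
    refine ⟨?_, hev⟩
    simpa [hg, add_assoc] using hsum
  -- `E3 u` enumerates exactly the edge ends at `u`
  have hfilter : ∀ u : M.V,
      (Finset.univ.filter fun p : M.E × Bool => M.endAt p.1 p.2 = some u)
        = Finset.univ.image (E3 u) := by
    intro u
    have hsub : Finset.univ.image (E3 u) ⊆
        Finset.univ.filter fun p : M.E × Bool => M.endAt p.1 p.2 = some u := by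
      intro q hq
      simp only [Finset.mem_image, Finset.mem_univ, true_and] at hq
      obtain ⟨j, rfl⟩ := hq
      simp [hE3]
    have hcard : (Finset.univ.image (E3 u)).card = 3 := by
      rw [Finset.card_image_of_injective _ (hE3inj u)]
      simp
    have hdeg : (Finset.univ.filter
        fun p : M.E × Bool => M.endAt p.1 p.2 = some u).card = 3 := hM u
    exact (Finset.eq_of_subset_of_card_le hsub (by omega)).symm
  have hmemu : ∀ (u : M.V) (p : M.E × Bool),
      M.endAt p.1 p.2 = some u ↔ p ∈ Finset.univ.image (E3 u) := by
    intro u p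
    rw [← hfilter u, Finset.mem_filter]
    simp
  have hsurj : ∀ (u : M.V) (p : M.E × Bool), M.endAt p.1 p.2 = some u →
      ∃ j, E3 u j = p := by
    intro u p hp
    have := (hmemu u p).1 hp
    simpa using this
  -- `d` enumerates exactly the semiedge ends
  have hmemd : ∀ p : M.E × Bool,
      M.endAt p.1 p.2 = none ↔ p ∈ Finset.univ.image d := by
    intro p
    simp only [Finset.mem_image, Finset.mem_univ, true_and]
    constructor
    · exact hdall p
    · rintro ⟨i, rfl⟩; exact hd i
  -- the parity counting argument
  have key : ∀ a : Klein, a ≠ 0 →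
      (if g (d 0).1 = a then (1 : ZMod 2) else 0) +
      (if g (d 1).1 = a then (1 : ZMod 2) else 0) +
      (if g (d 2).1 = a then (1 : ZMod 2) else 0) = 0 := by
    intro a ha
    have htot : (∑ o : Option M.V, ∑ p : M.E × Bool,
        if M.endAt p.1 p.2 = o then (if g p.1 = a then (1 : ZMod 2) else 0) else 0) = 0 := by
      rw [Finset.sum_comm]
      have h1 : ∀ p : M.E × Bool,
          (∑ o : Option M.V, if M.endAt p.1 p.2 = o then
            (if g p.1 = a then (1 : ZMod 2) else 0) else 0)
            = (if g p.1 = a then (1 : ZMod 2) else 0) := by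
        intro p
        rw [Finset.sum_ite_eq]
        simp
      calc (∑ p : M.E × Bool, ∑ o : Option M.V, if M.endAt p.1 p.2 = o then
              (if g p.1 = a then (1 : ZMod 2) else 0) else 0)
          = ∑ p : M.E × Bool, (if g p.1 = a then (1 : ZMod 2) else 0) :=
            Finset.sum_congr rfl fun p _ => h1 p
        _ = 0 := by
            rw [Fintype.sum_prod_type]
            refine Finset.sum_eq_zero fun e _ => ?_
            rw [Fintype.sum_bool]
            split_ifs <;> decide
    have hsome : ∀ u : M.V, (∑ p : M.E × Bool,
        if M.endAt p.1 p.2 = some u then (if g p.1 = a then (1 : ZMod 2) else 0) else 0)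
          = 0 := by
      intro u
      have hc : (∑ p : M.E × Bool,
          if M.endAt p.1 p.2 = some u then (if g p.1 = a then (1 : ZMod 2) else 0) else 0)
            = ∑ j : Fin 3, (if g (E3 u j).1 = a then (1 : ZMod 2) else 0) :=
        calc (∑ p : M.E × Bool,
            if M.endAt p.1 p.2 = some u then (if g p.1 = a then (1 : ZMod 2) else 0) else 0)
            = ∑ p : M.E × Bool, if p ∈ Finset.univ.image (E3 u) then
                (if g p.1 = a then (1 : ZMod 2) else 0) else 0 :=
              Finset.sum_congr rfl fun p _ => if_congr (hmemu u p) rfl rfl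
          _ = ∑ p ∈ Finset.univ ∩ Finset.univ.image (E3 u),
                (if g p.1 = a then (1 : ZMod 2) else 0) := Finset.sum_ite_mem _ _ _
          _ = ∑ p ∈ Finset.univ.image (E3 u),
                (if g p.1 = a then (1 : ZMod 2) else 0) := by rw [Finset.univ_inter]
          _ = ∑ j : Fin 3, (if g (E3 u j).1 = a then (1 : ZMod 2) else 0) :=
              Finset.sum_image fun x _ y _ h => hE3inj u h
      rw [hc, Fin.sum_univ_three]
      obtain ⟨hs, hev⟩ := hvert u
      exact klein_tri _ _ _ a ha hs hev
    have hnone : (∑ p : M.E × Bool,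
        if M.endAt p.1 p.2 = none then (if g p.1 = a then (1 : ZMod 2) else 0) else 0)
          = (if g (d 0).1 = a then (1 : ZMod 2) else 0) +
            (if g (d 1).1 = a then (1 : ZMod 2) else 0) +
            (if g (d 2).1 = a then (1 : ZMod 2) else 0) := by
      have hc : (∑ p : M.E × Bool,
          if M.endAt p.1 p.2 = none then (if g p.1 = a then (1 : ZMod 2) else 0) else 0)
            = ∑ j : Fin 3, (if g (d j).1 = a then (1 : ZMod 2) else 0) :=
        calc (∑ p : M.E × Bool,
            if M.endAt p.1 p.2 = none then (if g p.1 = a then (1 : ZMod 2) else 0) else 0)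
            = ∑ p : M.E × Bool, if p ∈ Finset.univ.image d then
                (if g p.1 = a then (1 : ZMod 2) else 0) else 0 :=
              Finset.sum_congr rfl fun p _ => if_congr (hmemd p) rfl rfl
          _ = ∑ p ∈ Finset.univ ∩ Finset.univ.image d,
                (if g p.1 = a then (1 : ZMod 2) else 0) := Finset.sum_ite_mem _ _ _
          _ = ∑ p ∈ Finset.univ.image d,
                (if g p.1 = a then (1 : ZMod 2) else 0) := by rw [Finset.univ_inter]
          _ = ∑ j : Fin 3, (if g (d j).1 = a then (1 : ZMod 2) else 0) :=
              Finset.sum_image fun x _ y _ h => hdinj h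
      rw [hc, Fin.sum_univ_three]
    rw [Fintype.sum_option] at htot
    rw [hnone] at htot
    simpa [hsome] using htot
  -- nonzero colours on the semiedges
  have hnz : ∀ i : Fin 3, (ψ (d i).1).1 ≠ 0 ∧ (ψ (d i).1).2 ≠ 0 := by
    intro i
    obtain ⟨j, hj⟩ := hsurj (v i) ((d i).1, !(d i).2) (hv i)
    have hedge : (E3 (v i) j).1 = (d i).1 := by rw [hj]
    have nz := (hHs (v i) _ _ _ _ _ _ (hψ (v i))).1
    have nzk : ∀ k : Fin 3,
        (ψ (E3 (v i) k).1).1 ≠ 0 ∧ (ψ (E3 (v i) k).1).2 ≠ 0 := by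
      intro k
      fin_cases k
      · exact ⟨nz.1, nz.2.1⟩
      · exact ⟨nz.2.2.1, nz.2.2.2.1⟩
      · exact ⟨nz.2.2.2.2.1, nz.2.2.2.2.2⟩
    have := nzk j
    rwa [hedge] at this
  -- assemble
  have hg0 : g (d 0).1 = a1 + b1 := by simp [hg, hD0]
  have hg1 : g (d 1).1 = a2 + b2 := by simp [hg, hD1]
  have hg2 : g (d 2).1 = a3 + b3 := by simp [hg, hD2]
  have hkey' : ∀ a : Klein, a ≠ 0 →
      (if a1 + b1 = a then (1 : ZMod 2) else 0) +
      (if a2 + b2 = a then (1 : ZMod 2) else 0) +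
      (if a3 + b3 = a then (1 : ZMod 2) else 0) = 0 := by
    intro a ha
    have := key a ha
    rwa [hg0, hg1, hg2] at this
  obtain ⟨hsum, hev⟩ := klein_fin3 _ _ _ hkey'
  have h0 := hnz 0
  have h1 := hnz 1
  have h2 := hnz 2
  rw [hD0] at h0; rw [hD1] at h1; rw [hD2] at h2
  refine ⟨⟨h0.1, h0.2, h1.1, h1.2, h2.1, h2.2⟩, ?_, hev⟩
  calc a1 + b1 + a2 + b2 + a3 + b3 = (a1 + b1) + (a2 + b2) + (a3 + b3) := by
        abel
    _ = 0 := hsum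
end

section
/- Let N1(I1,O1,r1) and N2(I2,O2,r2) be two perfect negators. Form the (2,2,1)-pole M = NN(N1,N2) by joining O1 to I2 and adding a new vertex v incident with r1, r2 and a new dangling edge r3. Then Col(M) = Col(P2), where P2 is the path of length two with connectors (I,O,r) formed by the dangling edges at its two endvertices and its middle vertex. In particular, for every colouring φ of M, φ*(I1) ≠ 0, φ*(O2) ≠ 0, and φ(r3) = φ*(I1) + φ*(O2). -/
/-- The colouring set of a 5-pole, as a predicate on the colours of its five
semiedges. -/
abbrev Pred5 : Type := Klein → Klein → Klein → Klein → Klein → Prop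

/-- The defining property of colourings `(i₁,i₂,o₁,o₂,r)` of a negator
`N(I,O,r)`: all colours are nonzero and exactly one of the flows through
`I = {i₁,i₂}` and `O = {o₁,o₂}` is zero, the nonzero one being equal to the
colour of the residual semiedge `r`. -/
def NegC (i1 i2 o1 o2 r : Klein) : Prop :=
  i1 ≠ 0 ∧ i2 ≠ 0 ∧ o1 ≠ 0 ∧ o2 ≠ 0 ∧ r ≠ 0 ∧
    ((i1 + i2 = 0 ∧ o1 + o2 ≠ 0 ∧ o1 + o2 = r) ∨
     (o1 + o2 = 0 ∧ i1 + i2 ≠ 0 ∧ i1 + i2 = r))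

/-- `N` is (the colouring set of) a negator `N(I,O,r)`. -/
def IsNegator (N : Pred5) : Prop :=
  ∀ i1 i2 o1 o2 r, N i1 i2 o1 o2 r → NegC i1 i2 o1 o2 r

/-- `N` is a perfect negator: its colouring set is the full set `NegC`. -/
def IsPerfectNegator (N : Pred5) : Prop :=
  ∀ i1 i2 o1 o2 r, N i1 i2 o1 o2 r ↔ NegC i1 i2 o1 o2 r

/-- The defining property of colourings `(b₁,b₂,c₁,c₂,c₃)` of a proper
`(2,3)`-pole `T(B,C)`: the flows through `B` and `C` agree and are nonzero. -/
def P23C (b1 b2 c1 c2 c3 : Klein) : Prop :=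
  b1 ≠ 0 ∧ b2 ≠ 0 ∧ c1 ≠ 0 ∧ c2 ≠ 0 ∧ c3 ≠ 0 ∧
    b1 + b2 = c1 + c2 + c3 ∧ b1 + b2 ≠ 0

/-- `T` is (the colouring set of) a proper `(2,3)`-pole. -/
def IsProper23 (T : Pred5) : Prop :=
  ∀ b1 b2 c1 c2 c3, T b1 b2 c1 c2 c3 → P23C b1 b2 c1 c2 c3

/-- `T` is a perfect proper `(2,3)`-pole: its colouring set is all of `P23C`. -/
def IsPerfect23 (T : Pred5) : Prop :=
  ∀ b1 b2 c1 c2 c3, T b1 b2 c1 c2 c3 ↔ P23C b1 b2 c1 c2 c3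

/-- The colouring set of the path `P₂` of length two with dangling edges
retained, the semiedges listed as (two at one endvertex, two at the other
endvertex, one at the middle vertex). -/
def P2C (a b c d e : Klein) : Prop :=
  a ≠ 0 ∧ b ≠ 0 ∧ c ≠ 0 ∧ d ≠ 0 ∧ e ≠ 0 ∧ a ≠ b ∧ c ≠ d ∧ a + b + c + d + e = 0

/-- The colouring set of the disconnected `(2,3)`-pole `M_ev` consisting of an
isolated edge (semiedges `x₁,x₂`) and a single vertex with three dangling
edges (semiedges `a,b,c`). -/
def MevC (x1 x2 a b c : Klein) : Prop :=
  x1 ≠ 0 ∧ x2 ≠ 0 ∧ a ≠ 0 ∧ b ≠ 0 ∧ c ≠ 0 ∧ x1 = x2 ∧ a + b + c = 0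

/-- The colouring set of the `(2,2,2)`-pole `V₄` consisting of a vertex and its
three neighbours, each carrying two dangling edges; the `i`-th connector has
semiedge colours `aᵢ, bᵢ`. -/
def V4C (a1 b1 a2 b2 a3 b3 : Klein) : Prop :=
  a1 ≠ 0 ∧ b1 ≠ 0 ∧ a2 ≠ 0 ∧ b2 ≠ 0 ∧ a3 ≠ 0 ∧ b3 ≠ 0 ∧
    a1 ≠ b1 ∧ a2 ≠ b2 ∧ a3 ≠ b3 ∧ a1 + b1 + a2 + b2 + a3 + b3 = 0

/-- The colouring set of the `(2,2,1)`-pole `NN(N₁,N₂)`: join `O₁` to `I₂`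
(shared colours `c₁, c₂`) and add a new vertex `v` incident with the residual
semiedges `r₁, r₂` and a new dangling edge `r₃` (properness at `v` being the
pairwise distinctness of `r₁, r₂, r₃`). -/
def NNcol (N1 N2 : Pred5) (i1 i2 o1 o2 r3 : Klein) : Prop :=
  ∃ c1 c2 r1 r2 : Klein,
    N1 i1 i2 c1 c2 r1 ∧ N2 c1 c2 o1 o2 r2 ∧
    r3 ≠ 0 ∧ r1 ≠ r2 ∧ r1 ≠ r3 ∧ r2 ≠ r3

lemma klein_add_eq_zero : ∀ a b : Klein, a + b = 0 ↔ a = b := by decide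

lemma klein_three : ∀ r1 r2 r3 : Klein, r1 ≠ 0 → r2 ≠ 0 → r3 ≠ 0 →
    r1 ≠ r2 → r1 ≠ r3 → r2 ≠ r3 → r3 = r1 + r2 := by decide

lemma klein_sum5 : ∀ a b c d e : Klein, a + b + c + d + e = 0 ↔ e = (a + b) + (c + d) := by decide

lemma klein_dist : ∀ s t : Klein, s ≠ 0 → t ≠ 0 → s + t ≠ 0 →
    s ≠ t ∧ s ≠ s + t ∧ t ≠ s + t := by decide

/-- **(2,2,1)-poles of type NN.**  If `N₁` and `N₂` are perfect negators, then
`Col(NN(N₁,N₂)) = Col(P₂)`; in particular for every colouring `φ` of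
`NN(N₁,N₂)` one has `φ*(I₁) ≠ 0`, `φ*(O₂) ≠ 0` and
`φ(r₃) = φ*(I₁) + φ*(O₂)`. -/
theorem nn_pole_perfect (N1 N2 : Pred5)
    (h1 : IsPerfectNegator N1) (h2 : IsPerfectNegator N2) :
    (∀ i1 i2 o1 o2 r3, NNcol N1 N2 i1 i2 o1 o2 r3 ↔ P2C i1 i2 o1 o2 r3) ∧
    (∀ i1 i2 o1 o2 r3, NNcol N1 N2 i1 i2 o1 o2 r3 →
       i1 + i2 ≠ 0 ∧ o1 + o2 ≠ 0 ∧ r3 = (i1 + i2) + (o1 + o2)) := by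

  have key : ∀ i1 i2 o1 o2 r3, NNcol N1 N2 i1 i2 o1 o2 r3 →
      i1 ≠ 0 ∧ i2 ≠ 0 ∧ o1 ≠ 0 ∧ o2 ≠ 0 ∧ r3 ≠ 0 ∧
        i1 + i2 ≠ 0 ∧ o1 + o2 ≠ 0 ∧ r3 = (i1 + i2) + (o1 + o2) := by
    rintro i1 i2 o1 o2 r3 ⟨c1, c2, r1, r2, hN1, hN2, hr3, h12, h13, h23⟩
    obtain ⟨hi1, hi2, hc1, hc2, hr1, hd1⟩ := (h1 _ _ _ _ _).1 hN1
    obtain ⟨-, -, ho1, ho2, hr2, hd2⟩ := (h2 _ _ _ _ _).1 hN2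
    have hc : c1 + c2 = 0 := by
      by_contra hc
      have e1 : r1 = c1 + c2 := by
        rcases hd1 with ⟨-, -, e⟩ | ⟨e, -, -⟩
        · exact e.symm
        · exact absurd e hc
      have e2 : r2 = c1 + c2 := by
        rcases hd2 with ⟨e, -, -⟩ | ⟨-, -, e⟩
        · exact absurd e hc
        · exact e.symm
      exact h12 (e1.trans e2.symm)
    have e1 : i1 + i2 ≠ 0 ∧ r1 = i1 + i2 := by
      rcases hd1 with ⟨-, e, -⟩ | ⟨-, e, e'⟩
      · exact absurd hc e
      · exact ⟨e, e'.symm⟩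
    have e2 : o1 + o2 ≠ 0 ∧ r2 = o1 + o2 := by
      rcases hd2 with ⟨-, e, e'⟩ | ⟨-, e, -⟩
      · exact ⟨e, e'.symm⟩
      · exact absurd hc e
    refine ⟨hi1, hi2, ho1, ho2, hr3, e1.1, e2.1, ?_⟩
    have := klein_three r1 r2 r3 hr1 hr2 hr3 h12 h13 h23
    rw [e1.2, e2.2] at this
    exact this
  constructor
  · intro i1 i2 o1 o2 r3
    constructor
    · intro h
      obtain ⟨hi1, hi2, ho1, ho2, hr3, hs1, hs2, he⟩ := key _ _ _ _ _ h
      refine ⟨hi1, hi2, ho1, ho2, hr3, ?_, ?_, ?_⟩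
      · intro e; exact hs1 ((klein_add_eq_zero i1 i2).2 e)
      · intro e; exact hs2 ((klein_add_eq_zero o1 o2).2 e)
      · exact (klein_sum5 i1 i2 o1 o2 r3).2 he
    · rintro ⟨hi1, hi2, ho1, ho2, hr3, hab, hcd, hsum⟩
      have hs1 : i1 + i2 ≠ 0 := fun e => hab ((klein_add_eq_zero i1 i2).1 e)
      have hs2 : o1 + o2 ≠ 0 := fun e => hcd ((klein_add_eq_zero o1 o2).1 e)
      have he : r3 = (i1 + i2) + (o1 + o2) := (klein_sum5 i1 i2 o1 o2 r3).1 hsum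
      obtain ⟨d1, d2, d3⟩ := klein_dist (i1 + i2) (o1 + o2) hs1 hs2 (he ▸ hr3)
      have hone : ((1 : ZMod 2), (0 : ZMod 2)) ≠ (0 : Klein) := by decide
      refine ⟨(1, 0), (1, 0), i1 + i2, o1 + o2, ?_, ?_, hr3, d1, he ▸ d2, he ▸ d3⟩
      · exact (h1 _ _ _ _ _).2 ⟨hi1, hi2, hone, hone, hs1, Or.inr ⟨by decide, hs1, rfl⟩⟩
      · exact (h2 _ _ _ _ _).2 ⟨hone, hone, ho1, ho2, hs2, Or.inl ⟨by decide, hs2, rfl⟩⟩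
  · intro i1 i2 o1 o2 r3 h
    obtain ⟨-, -, -, -, -, hs1, hs2, he⟩ := key _ _ _ _ _ h
    exact ⟨hs1, hs2, he⟩
end

section
/- Let T1(B1,C1) and T2(B2,C2) be two perfect proper (2,3)-poles. Form the (2,2,1)-pole M = TT(T1,T2) by joining C1 to C2, subdividing one of the three resulting edges with a vertex v, and attaching a dangling edge r at v. Then Col(M) = Col(P2); in particular M is a proper (2,2,1)-pole. -/
/-- The colouring set of the `(2,2,1)`-pole `TT(T₁,T₂)`: join `C₁` to `C₂`
(two direct edges with colours `d₁, d₂`), subdivide the third resulting edge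
with a vertex `v` (the two halves having colours `p` and `q`) and attach a
dangling edge `r` at `v` (properness at `v` being the pairwise distinctness of
`p, q, r`). -/
def TTcol (T1 T2 : Pred5) (b11 b12 b21 b22 r : Klein) : Prop :=
  ∃ p q d1 d2 : Klein,
    T1 b11 b12 p d1 d2 ∧ T2 b21 b22 q d1 d2 ∧
    r ≠ 0 ∧ p ≠ q ∧ p ≠ r ∧ q ≠ r

set_option maxHeartbeats 4000000 in
set_option synthInstance.maxSize 4000 in
theorem exists_pair : ∀ s : Klein, ∃ d1 d2 : Klein, d1 ≠ 0 ∧ d2 ≠ 0 ∧ d1 + d2 = s := by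
  decide

set_option maxHeartbeats 4000000 in
set_option synthInstance.maxSize 4000 in
theorem key_small : ∀ b11 b12 b21 b22 r : Klein,
    (∃ p q : Klein, p ≠ 0 ∧ q ≠ 0 ∧ b11 ≠ 0 ∧ b12 ≠ 0 ∧ b21 ≠ 0 ∧ b22 ≠ 0 ∧
      b11 + b12 ≠ 0 ∧ b21 + b22 ≠ 0 ∧ b11 + b12 + p = b21 + b22 + q ∧
      r ≠ 0 ∧ p ≠ q ∧ p ≠ r ∧ q ≠ r) ↔ P2C b11 b12 b21 b22 r := by
  unfold P2C
  decide

theorem klein_self : ∀ x : Klein, x + x = 0 := by decide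

theorem klein_cancel : ∀ x y : Klein, x + (y + x) = y := by decide

theorem key_aux : ∀ b11 b12 b21 b22 r : Klein,
    (∃ p q d1 d2 : Klein, P23C b11 b12 p d1 d2 ∧ P23C b21 b22 q d1 d2 ∧
      r ≠ 0 ∧ p ≠ q ∧ p ≠ r ∧ q ≠ r) ↔ P2C b11 b12 b21 b22 r := by
  intro b11 b12 b21 b22 r
  rw [← key_small b11 b12 b21 b22 r]
  constructor
  · rintro ⟨p, q, d1, d2, ⟨h1, h2, hp, hd1, hd2, he1, hn1⟩, ⟨h3, h4, hq, -, -, he2, hn2⟩, hr⟩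
    refine ⟨p, q, hp, hq, h1, h2, h3, h4, hn1, hn2, ?_, hr⟩
    have : b11 + b12 + p = p + d1 + d2 + p := by rw [← he1]
    have e1 : b11 + b12 + p = d1 + d2 := by
      rw [this]; have := klein_self p; linear_combination this
    have : b21 + b22 + q = q + d1 + d2 + q := by rw [← he2]
    have e2 : b21 + b22 + q = d1 + d2 := by
      rw [this]; have := klein_self q; linear_combination this
    rw [e1, e2]
  · rintro ⟨p, q, hp, hq, h1, h2, h3, h4, hn1, hn2, he, hr⟩
    obtain ⟨d1, d2, hd1, hd2, hds⟩ := exists_pair (b11 + b12 + p)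
    refine ⟨p, q, d1, d2, ⟨h1, h2, hp, hd1, hd2, ?_, hn1⟩, ⟨h3, h4, hq, hd1, hd2, ?_, hn2⟩, hr⟩
    · rw [add_assoc, hds]; exact (klein_cancel p (b11 + b12)).symm
    · rw [add_assoc, hds, he]; exact (klein_cancel q (b21 + b22)).symm

set_option maxHeartbeats 4000000 in
set_option synthInstance.maxSize 4000 in
theorem key2_aux : ∀ a b c d e : Klein, P2C a b c d e → a + b ≠ 0 ∧ c + d ≠ 0 ∧ e ≠ 0 := by
  unfold P2C
  decide

/-- **(2,2,1)-poles of type TT.**  If `T₁` and `T₂` are perfect proper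
`(2,3)`-poles then `Col(TT(T₁,T₂)) = Col(P₂)`; in particular `TT(T₁,T₂)` is a
proper `(2,2,1)`-pole. -/
theorem tt_pole_perfect (T1 T2 : Pred5)
    (h1 : IsPerfect23 T1) (h2 : IsPerfect23 T2) :
    (∀ b11 b12 b21 b22 r, TTcol T1 T2 b11 b12 b21 b22 r ↔ P2C b11 b12 b21 b22 r) ∧
    (∀ b11 b12 b21 b22 r, TTcol T1 T2 b11 b12 b21 b22 r →
       b11 + b12 ≠ 0 ∧ b21 + b22 ≠ 0 ∧ r ≠ 0) := by
  have key := key_aux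
  have key2 := key2_aux
  have main : ∀ b11 b12 b21 b22 r, TTcol T1 T2 b11 b12 b21 b22 r ↔ P2C b11 b12 b21 b22 r := by
    intro b11 b12 b21 b22 r
    rw [← key]
    constructor <;> rintro ⟨p, q, d1, d2, hA, hB, hr⟩
    · exact ⟨p, q, d1, d2, (h1 _ _ _ _ _).mp hA, (h2 _ _ _ _ _).mp hB, hr⟩
    · exact ⟨p, q, d1, d2, (h1 _ _ _ _ _).mpr hA, (h2 _ _ _ _ _).mpr hB, hr⟩
  exact ⟨main, fun b11 b12 b21 b22 r h => key2 _ _ _ _ _ ((main _ _ _ _ _).mp h)⟩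
end

section
/- Let N(I,O,r) be a negator and T(B,C) a proper (2,3)-pole. Form the (2,3)-pole M = NT(N,T) by joining O to B, subdividing one dangling edge of C with a new vertex v, and attaching r to v; the 3-connector C' of M consists of the two remaining semiedges of C together with the new dangling edge at v, and the 2-connector is I. Then for every colouring φ of M, φ*(I) = 0 and φ*(C') = 0; thus M is an improper (2,3)-pole and Col(M) ⊆ Col(M_ev). Moreover if N and T are perfect then Col(M) = Col(M_ev). -/
/-- The colouring set of the `(2,3)`-pole `NT(N,T)`: join `O` to `B` (shared
colours `o₁, o₂`), subdivide the dangling edge of `C` with colour `c₁` by a new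
vertex `v` and attach the residual semiedge `r` of `N` to `v`; the new dangling
edge at `v` has colour `c₁'` (properness at `v` being the pairwise
distinctness of `c₁, c₁', r`).  The 3-connector of `NT(N,T)` is
`C' = (c₁', c₂, c₃)` and the 2-connector is `I = (i₁, i₂)`. -/
def NTcol (N T : Pred5) (i1 i2 c1' c2 c3 : Klein) : Prop :=
  ∃ o1 o2 r c1 : Klein,
    N i1 i2 o1 o2 r ∧ T o1 o2 c1 c2 c3 ∧
    c1' ≠ 0 ∧ c1 ≠ c1' ∧ c1 ≠ r ∧ c1' ≠ r


lemma klein_dbl : ∀ a : Klein, a + a = 0 := by decide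

lemma klein_three_s11 : ∀ a b c : Klein, a ≠ 0 → b ≠ 0 → c ≠ 0 → a ≠ b → a ≠ c → b ≠ c →
    a + b + c = 0 := by decide

lemma klein_pick : ∀ x : Klein, x ≠ 0 →
    ∃ c r : Klein, c ≠ 0 ∧ r ≠ 0 ∧ c ≠ x ∧ c ≠ r ∧ x ≠ r ∧ c + x = r := by decide

lemma nt_fwd (N T : Pred5) (hN : IsNegator N) (hT : IsProper23 T)
    (i1 i2 c1' c2 c3 : Klein) (h : NTcol N T i1 i2 c1' c2 c3) :
    i1 + i2 = 0 ∧ c1' + c2 + c3 = 0 ∧ MevC i1 i2 c1' c2 c3 := by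
  obtain ⟨o1, o2, r, c1, hNc, hTc, hc1', hcc, hcr, hc'r⟩ := h
  obtain ⟨hi1, hi2, ho1, ho2, hr, hcase⟩ := hN _ _ _ _ _ hNc
  obtain ⟨-, -, hc1, hc2, hc3, hsum, hBne⟩ := hT _ _ _ _ _ hTc
  rcases hcase with ⟨hI, -, hOr⟩ | ⟨hO, -, -⟩
  · -- the three pairwise distinct nonzero colours at v sum to zero
    have h3 : c1 + c1' + r = 0 := klein_three_s11 c1 c1' r hc1 hc1' hr hcc hcr hc'r
    have hc123 : c1 + c2 + c3 = r := by rw [← hsum, hOr]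
    have hC : c1' + c2 + c3 = 0 := by linear_combination h3 + hc123 - klein_dbl c1
    have hi12 : i1 = i2 := by linear_combination hI - klein_dbl i2
    exact ⟨hI, hC, hi1, hi2, hc1', hc2, hc3, hi12, hC⟩
  · exact absurd hO hBne

theorem nt_pole' (N T : Pred5) (hN : IsNegator N) (hT : IsProper23 T) :
    (∀ i1 i2 c1' c2 c3, NTcol N T i1 i2 c1' c2 c3 →
       i1 + i2 = 0 ∧ c1' + c2 + c3 = 0 ∧ MevC i1 i2 c1' c2 c3) ∧
    (IsPerfectNegator N → IsPerfect23 T →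
       ∀ i1 i2 c1' c2 c3, NTcol N T i1 i2 c1' c2 c3 ↔ MevC i1 i2 c1' c2 c3) := by
  refine ⟨nt_fwd N T hN hT, fun hPN hPT i1 i2 c1' c2 c3 => ⟨fun h => (nt_fwd N T hN hT _ _ _ _ _ h).2.2, fun h => ?_⟩⟩
  obtain ⟨hi1, hi2, hc1', hc2, hc3, hi12, hsum⟩ := h
  obtain ⟨c1, r, hc1, hr, hcc, hcr, hc'r, hceq⟩ := klein_pick c1' hc1'
  have hI : i1 + i2 = 0 := by linear_combination hi12 + klein_dbl i2
  have hO : c1 + c1' = r := hceq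
  have hOne : c1 + c1' ≠ 0 := hO ▸ hr
  refine ⟨c1, c1', r, c1, ?_, ?_, hc1', hcc, hcr, hc'r⟩
  · exact (hPN i1 i2 c1 c1' r).2 ⟨hi1, hi2, hc1, hc1', hr, Or.inl ⟨hI, hOne, hO⟩⟩
  · refine (hPT c1 c1' c1 c2 c3).2 ⟨hc1, hc1', hc1, hc2, hc3, ?_, hOne⟩
    linear_combination klein_dbl c1' - hsum

/-- **Improper (2,3)-poles of type NT.**  If `N` is a negator and `T` a proper
`(2,3)`-pole, then every colouring of `NT(N,T)` has zero flow through both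
connectors `I` and `C'`; thus `NT(N,T)` is an improper `(2,3)`-pole and
`Col(NT(N,T)) ⊆ Col(M_ev)`.  Moreover if `N` and `T` are perfect then
`Col(NT(N,T)) = Col(M_ev)`. -/
theorem nt_pole (N T : Pred5) (hN : IsNegator N) (hT : IsProper23 T) :
    (∀ i1 i2 c1' c2 c3, NTcol N T i1 i2 c1' c2 c3 →
       i1 + i2 = 0 ∧ c1' + c2 + c3 = 0 ∧ MevC i1 i2 c1' c2 c3) ∧
    (IsPerfectNegator N → IsPerfect23 T →
       ∀ i1 i2 c1' c2 c3, NTcol N T i1 i2 c1' c2 c3 ↔ MevC i1 i2 c1' c2 c3) := by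
  exact nt_pole' N T hN hT
end

section
/- Let N1 and N2 be negators and T1 and T2 proper (2,3)-poles. Form the 9-pole M1 by joining one 2-connector of N1 to the 2-connector B1 of T1, one 2-connector of N2 to B2 of T2, and joining the remaining 2-connectors of N1 and N2 to a (2,2,1)-pole consisting of one vertex with three dangling edges and one isolated edge (as in the Class 34-A configuration, with residual semiedges r1, r2 attached appropriately and one free dangling edge e). Then M1 admits no proper 3-edge-colouring. -/
/-- **Class 34-A: the uncolourable 9-pole `M₁`.**  Let `N₁, N₂` be negators and
`T₁, T₂` proper `(2,3)`-poles.  Join the output connector of `N₁` to `B₁` of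
`T₁` and that of `N₂` to `B₂` of `T₂`, and join the input connectors of `N₁`
and `N₂` to the `(2,2,1)`-pole consisting of one vertex `z` (with two ends
`i₁₁`-side, `i₂₁`-side, and a free dangling edge `e`) and one isolated edge
(forcing `i₁₂ = i₂₂`).  Then `M₁` admits no proper 3-edge-colouring. -/
theorem class_34A_uncolourable (N1 N2 T1 T2 : Pred5)
    (hN1 : IsNegator N1) (hN2 : IsNegator N2)
    (hT1 : IsProper23 T1) (hT2 : IsProper23 T2) :
    ¬ ∃ i11 i12 o11 o12 r1 i21 i22 o21 o22 r2
        c11 c12 c13 c21 c22 c23 e : Klein,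
        N1 i11 i12 o11 o12 r1 ∧ T1 o11 o12 c11 c12 c13 ∧
        N2 i21 i22 o21 o22 r2 ∧ T2 o21 o22 c21 c22 c23 ∧
        i12 = i22 ∧ e ≠ 0 ∧ i11 + i21 + e = 0 := by
  rintro ⟨i11,i12,o11,o12,r1,i21,i22,o21,o22,r2,c11,c12,c13,c21,c22,c23,e,
    hn1, ht1, hn2, ht2, hi, he, hsum⟩
  obtain ⟨-,-,-,-,-,h1⟩ := hN1 _ _ _ _ _ hn1
  obtain ⟨-,-,-,-,-,h2⟩ := hN2 _ _ _ _ _ hn2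
  obtain ⟨-,-,-,-,-,-,hb1⟩ := hT1 _ _ _ _ _ ht1
  obtain ⟨-,-,-,-,-,-,hb2⟩ := hT2 _ _ _ _ _ ht2
  have e1 : i11 + i12 = 0 := by
    rcases h1 with ⟨h,-⟩|⟨h,-⟩
    · exact h
    · exact absurd h hb1
  have e2 : i21 + i22 = 0 := by
    rcases h2 with ⟨h,-⟩|⟨h,-⟩
    · exact h
    · exact absurd h hb2
  apply he
  have : i11 + i21 = 0 := by
    rw [hi] at e1
    have h22 := CharTwo.add_self_eq_zero (R := Klein) i22
    linear_combination e1 + e2 - h22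
  linear_combination hsum - this
end
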